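/- arXiv:1602.08577 — 5 statements merged into one kernel-verified Lean document; each statement's English description precedes it below -/
import Mathlib

section
/- Let γ be an uncountable cardinal and κ a cardinal with ℵ₀ < κ ≤ γ. Then every Abelian group G of cardinality γ is κ-asymorphic to the free Abelian group A_γ of rank γ (i.e., the direct sum of γ copies of the integers). -/
open Cardinal Pointwise

universe u

/-- A bijection `f : G ≃ H` between additive groups is a `κ`-asymorphism if for all
`X ∈ [G]^{<κ}` and `Y ∈ [H]^{<κ}` there are `X' ∈ [G]^{<κ}`, `Y' ∈ [H]^{<κ}` with
`f(X + x) ⊆ Y' + f x` for all `x ∈ G` and `f⁻¹(Y + y) ⊆ X' + f⁻¹ y` for all `y ∈ H`. -/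
def IsAddAsymorphism {G H : Type u} [AddGroup G] [AddGroup H] (κ : Cardinal.{u})
    (f : G ≃ H) : Prop :=
  ∀ X : Set G, ∀ Y : Set H, #X < κ → #Y < κ →
    ∃ X' : Set G, ∃ Y' : Set H, #X' < κ ∧ #Y' < κ ∧
      (∀ x : G, ⇑f '' (X + {x}) ⊆ Y' + {f x}) ∧
      (∀ y : H, ⇑f.symm '' (Y + {y}) ⊆ X' + {f.symm y})

/-!
It suffices to find a bijection `f` whose displacement sets `D a = {f (x + a) - f x | x}`, and
those of `f⁻¹`, are all countable: then `f (X + x) ⊆ (⋃ a ∈ X, D a) + f x`, and the union has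
fewer than `κ` elements. Such an `f` exists between any two abelian groups `K`, `L` of the same
uncountable cardinality. Well-order both in order type `#K`, so that proper initial segments are
small, and build by transfinite recursion a chain of mutually inverse bijections `φ : A → B`,
`ψ : B → A` between subgroups, with countable displacement sets on their domains. At a successor
step enlarge the small subgroups to `A ≤ A'`, `B ≤ B'` with `A' / A` and `B' / B` countably
infinite, match these cosets by a bijection `e` fixing `0`, and put
`φ' x = φ (x - r (x + A)) + r' (e (x + A))` for coset representatives `r`, `r'`. An old `a ∈ A`
is displaced as before, a new one by a countable union of translates of old displacement sets.
At limit stages take unions.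
-/

open Set QuotientAddGroup

namespace Asymorphism

def displacements {K L : Type*} [Add K] [Sub L] (φ : K → L) (S : Set K) (a : K) : Set L :=
  (fun x => φ (x + a) - φ x) '' S

lemma image_add_singleton_subset {G H : Type*} [AddCommGroup G] [AddGroup H] (f : G → H)
    (X : Set G) (x : G) :
    f '' (X + {x}) ⊆ (⋃ a ∈ X, displacements f Set.univ a) + {f x} := by
  rintro - ⟨-, ⟨a, ha, x, rfl, rfl⟩, rfl⟩
  refine ⟨f (x + a) - f x, mem_biUnion ha ⟨x, mem_univ x, rfl⟩, f x, rfl, ?_⟩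
  change f (x + a) - f x + f x = f (a + x)
  rw [sub_add_cancel, add_comm]

lemma mk_biUnion_lt_of_countable {α β : Type u} {κ : Cardinal.{u}} (hκ : ℵ₀ < κ) {X : Set α}
    (hX : #X < κ) {D : α → Set β} (hD : ∀ a ∈ X, (D a).Countable) :
    #(⋃ a ∈ X, D a) < κ := by
  refine (Cardinal.mk_biUnion_le D X).trans_lt (Cardinal.mul_lt_of_lt hκ.le hX ?_)
  exact (ciSup_le' fun a : X => (hD a a.2).le_aleph0).trans_lt hκ

theorem isAddAsymorphism_of_countable_displacements {G H : Type u} [AddCommGroup G]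
    [AddCommGroup H] {κ : Cardinal.{u}} (hκ : ℵ₀ < κ) (f : G ≃ H)
    (hf : ∀ a, (displacements f Set.univ a).Countable)
    (hf' : ∀ b, (displacements f.symm Set.univ b).Countable) : IsAddAsymorphism κ f :=
  fun X Y hX hY =>
    ⟨⋃ b ∈ Y, displacements f.symm Set.univ b, ⋃ a ∈ X, displacements f Set.univ a,
      mk_biUnion_lt_of_countable hκ hY fun b _ => hf' b,
      mk_biUnion_lt_of_countable hκ hX fun a _ => hf a,
      image_add_singleton_subset f X, image_add_singleton_subset f.symm Y⟩

structure PartialMap (K L : Type*) [AddGroup K] where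
  dom : AddSubgroup K
  toFun : K → L

namespace PartialMap

variable {K L : Type*} [AddCommGroup K] [AddCommGroup L]

/-- Besides extending the map, a larger partial map may only shrink the displacement sets of old
points: this is what keeps them countable along unions of long chains. -/
instance : Preorder (PartialMap K L) where
  le p q := p.dom ≤ q.dom ∧ EqOn q.toFun p.toFun p.dom ∧
    ∀ a ∈ p.dom, displacements q.toFun q.dom a ⊆ displacements p.toFun p.dom a
  le_refl p := ⟨le_rfl, eqOn_refl _ _, fun _ _ => Subset.rfl⟩
  le_trans p q r hpq hqr :=
    ⟨hpq.1.trans hqr.1, fun x hx => (hqr.2.1 (hpq.1 hx)).trans (hpq.2.1 hx),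
      fun a ha => (hqr.2.2 a (hpq.1 ha)).trans (hpq.2.2 a ha)⟩

variable {p q : PartialMap K L}

lemma dom_le_dom (h : p ≤ q) : p.dom ≤ q.dom := h.1

lemma eqOn_of_le (h : p ≤ q) : EqOn q.toFun p.toFun p.dom := h.2.1

lemma displacements_subset_of_le (h : p ≤ q) {a : K} (ha : a ∈ p.dom) :
    displacements q.toFun q.dom a ⊆ displacements p.toFun p.dom a := h.2.2 a ha

structure AdmissibleWith (p : PartialMap K L) (p' : PartialMap L K) : Prop where
  mapsTo : MapsTo p.toFun p.dom p'.dom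
  leftInvOn : LeftInvOn p'.toFun p.toFun p.dom
  countable_displacements : ∀ a ∈ p.dom, (displacements p.toFun p.dom a).Countable

lemma admissibleWith_bot : (⟨⊥, 0⟩ : PartialMap K L).AdmissibleWith ⟨⊥, 0⟩ where
  mapsTo _ _ := zero_mem _
  leftInvOn x hx := ((AddSubgroup.mem_bot).1 hx).symm
  countable_displacements _ _ := by
    simp only [displacements, AddSubgroup.coe_bot]
    exact (countable_singleton 0).image _

open Classical in
noncomputable def glue {ι : Type*} (Q : ι → PartialMap K L) : PartialMap K L where
  dom := ⨆ i, (Q i).dom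
  toFun x := if h : ∃ i, x ∈ (Q i).dom then (Q h.choose).toFun x else 0

section Glue

variable {ι : Type*} {Q : ι → PartialMap K L}

lemma glue_of_isEmpty [IsEmpty ι] : glue Q = ⟨⊥, 0⟩ := by
  have hdom : (glue Q).dom = ⊥ := iSup_of_empty _
  have htoFun : (glue Q).toFun = 0 := funext fun x => dif_neg (by simp)
  rw [← hdom, ← htoFun]

variable (hQ : Directed (· ≤ ·) Q)
include hQ

lemma directed_dom : Directed (· ≤ ·) fun i => (Q i).dom :=
  Directed.mono_comp (· ≤ ·) (g := dom) (fun _ _ h => dom_le_dom h) hQ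

lemma mem_glue_dom [Nonempty ι] {x : K} : x ∈ (glue Q).dom ↔ ∃ i, x ∈ (Q i).dom :=
  AddSubgroup.mem_iSup_of_directed (directed_dom hQ)

lemma glue_toFun_eq {i : ι} {x : K} (hx : x ∈ (Q i).dom) : (glue Q).toFun x = (Q i).toFun x := by
  have hex : ∃ j, x ∈ (Q j).dom := ⟨i, hx⟩
  obtain ⟨k, hjk, hik⟩ := hQ hex.choose i
  rw [show (glue Q).toFun x = (Q hex.choose).toFun x from dif_pos hex]
  exact (eqOn_of_le hjk hex.choose_spec).symm.trans (eqOn_of_le hik hx)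

lemma le_glue (i : ι) : Q i ≤ glue Q := by
  have : Nonempty ι := ⟨i⟩
  refine ⟨le_iSup (fun j => (Q j).dom) i, fun x hx => glue_toFun_eq hQ hx, ?_⟩
  rintro a ha - ⟨x, hx, rfl⟩
  obtain ⟨j, hj⟩ := (mem_glue_dom hQ).1 hx
  obtain ⟨k, hik, hjk⟩ := hQ i j
  have hxk := dom_le_dom hjk hj
  have hak := dom_le_dom hik ha
  refine displacements_subset_of_le hik ha ⟨x, hxk, ?_⟩
  simp only [glue_toFun_eq hQ hxk, glue_toFun_eq hQ (add_mem hxk hak)]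

lemma AdmissibleWith.glue {Q' : ι → PartialMap L K} (hQ' : Directed (· ≤ ·) Q')
    (h : ∀ i, (Q i).AdmissibleWith (Q' i)) : (glue Q).AdmissibleWith (glue Q') := by
  rcases isEmpty_or_nonempty ι with hι | hι
  · rw [glue_of_isEmpty, glue_of_isEmpty]
    exact admissibleWith_bot
  refine ⟨fun x hx => ?_, fun x hx => ?_, fun a ha => ?_⟩
  · obtain ⟨i, hi⟩ := (mem_glue_dom hQ).1 hx
    rw [glue_toFun_eq hQ hi]
    exact dom_le_dom (le_glue hQ' i) ((h i).mapsTo hi)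
  · obtain ⟨i, hi⟩ := (mem_glue_dom hQ).1 hx
    rw [glue_toFun_eq hQ hi, glue_toFun_eq hQ' ((h i).mapsTo hi), (h i).leftInvOn hi]
  · obtain ⟨i, hi⟩ := (mem_glue_dom hQ).1 ha
    exact ((h i).countable_displacements a hi).mono
      (displacements_subset_of_le (le_glue hQ i) hi)

end Glue

end PartialMap

section Extension

variable {K L : Type*} [AddCommGroup K] [AddCommGroup L]

/-- Representing the zero coset by `0` makes `extendFun` extend `φ`. -/
noncomputable def cosetRep (A : AddSubgroup K) (q : K ⧸ A) : K :=
  open Classical in if q = 0 then 0 else q.out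

variable {A : AddSubgroup K} {B : AddSubgroup L}

@[simp] lemma mk_cosetRep (q : K ⧸ A) : ((cosetRep A q : K) : K ⧸ A) = q := by
  unfold cosetRep; split_ifs with hq
  · rw [hq, QuotientAddGroup.mk_zero]
  · exact QuotientAddGroup.out_eq' q

@[simp] lemma cosetRep_zero : cosetRep A 0 = 0 := if_pos rfl

lemma sub_cosetRep_mem (x : K) : x - cosetRep A (x : K ⧸ A) ∈ A := by
  rw [← QuotientAddGroup.eq_zero_iff, QuotientAddGroup.mk_sub, mk_cosetRep, sub_self]

lemma cosetRep_add_sub_cosetRep_mem (q : K ⧸ A) (a : K) :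
    cosetRep A q + a - cosetRep A (q + a) ∈ A := by
  rw [← QuotientAddGroup.eq_zero_iff, QuotientAddGroup.mk_sub, QuotientAddGroup.mk_add,
    mk_cosetRep, mk_cosetRep, sub_self]

lemma mem_of_mk_mem_map {A' : AddSubgroup K} (hA : A ≤ A') {x : K}
    (hx : (x : K ⧸ A) ∈ A'.map (mk' A)) : x ∈ A' := by
  change mk' A x ∈ _ at hx
  rw [← AddSubgroup.mem_comap, AddSubgroup.comap_map_eq, ker_mk', sup_of_le_left hA] at hx
  exact hx

noncomputable def extendFun (A : AddSubgroup K) (B : AddSubgroup L) (φ : K → L)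
    (e : K ⧸ A → L ⧸ B) (x : K) : L :=
  φ (x - cosetRep A (x : K ⧸ A)) + cosetRep B (e x)

variable {φ : K → L} {e : K ⧸ A → L ⧸ B}

lemma extendFun_of_mem (he : e 0 = 0) {x : K} (hx : x ∈ A) : extendFun A B φ e x = φ x := by
  simp [extendFun, (QuotientAddGroup.eq_zero_iff x).2 hx, he]

lemma mk_extendFun (hφ : MapsTo φ A B) (x : K) :
    ((extendFun A B φ e x : L) : L ⧸ B) = e x := by
  rw [extendFun, QuotientAddGroup.mk_add, mk_cosetRep,
    (QuotientAddGroup.eq_zero_iff _).2 (hφ (sub_cosetRep_mem x)), zero_add]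

lemma extendFun_extendFun {ψ : L → K} {e' : L ⧸ B → K ⧸ A} (hφ : MapsTo φ A B)
    (hψφ : LeftInvOn ψ φ A) {x : K} (he : e' (e x) = x) :
    extendFun B A ψ e' (extendFun A B φ e x) = x := by
  rw [extendFun, mk_extendFun hφ, he, extendFun, add_sub_cancel_right,
    hψφ (sub_cosetRep_mem x), sub_add_cancel]

lemma displacements_extendFun_subset {a : K} (ha : a ∈ A) (S : Set K) :
    displacements (extendFun A B φ e) S a ⊆ displacements φ A a := by
  rintro - ⟨x, -, rfl⟩
  have hxa : ((x + a : K) : K ⧸ A) = x := by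
    rw [QuotientAddGroup.mk_add, (QuotientAddGroup.eq_zero_iff a).2 ha, add_zero]
  refine ⟨x - cosetRep A (x : K ⧸ A), sub_cosetRep_mem x, ?_⟩
  simp only [extendFun, hxa, add_sub_add_right_eq_sub]
  congr 2
  abel

lemma countable_displacements_extendFun {S : Set K}
    (hS : ((↑) '' S : Set (K ⧸ A)).Countable)
    (hφ : ∀ b ∈ A, (displacements φ A b).Countable) (a : K) :
    (displacements (extendFun A B φ e) S a).Countable := by
  -- on a coset `q`, displacing by `a` displaces `φ` by `cosetRep q + a - cosetRep (q + a) ∈ A`,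
  -- up to a shift depending only on `q`
  refine (hS.biUnion fun q _ => ((hφ _ (cosetRep_add_sub_cosetRep_mem q a)).image
    (· + (cosetRep B (e (q + a)) - cosetRep B (e q))))).mono ?_
  rintro - ⟨x, hx, rfl⟩
  refine mem_biUnion (mem_image_of_mem _ hx)
    ⟨φ (x - cosetRep A x + (cosetRep A x + a - cosetRep A (x + a))) - φ (x - cosetRep A x),
      ⟨_, sub_cosetRep_mem x, rfl⟩, ?_⟩
  simp only [extendFun, QuotientAddGroup.mk_add]
  abel_nf

end Extension

namespace PartialMap

variable {K L : Type*} [AddCommGroup K] [AddCommGroup L]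

noncomputable def extend (p : PartialMap K L) (A' : AddSubgroup K) (B : AddSubgroup L)
    (e : K ⧸ p.dom → L ⧸ B) : PartialMap K L :=
  ⟨A', extendFun p.dom B p.toFun e⟩

variable {p : PartialMap K L} {p' : PartialMap L K} {A' : AddSubgroup K} {B' : AddSubgroup L}

lemma le_extend (hA : p.dom ≤ A') {B : AddSubgroup L} {e : K ⧸ p.dom → L ⧸ B} (he : e 0 = 0) :
    p ≤ p.extend A' B e :=
  ⟨hA, fun _ hx => extendFun_of_mem he hx, fun _ ha => displacements_extendFun_subset ha _⟩

lemma AdmissibleWith.extend (h : p.AdmissibleWith p') (hB : p'.dom ≤ B')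
    {e : K ⧸ p.dom → L ⧸ p'.dom} {e' : L ⧸ p'.dom → K ⧸ p.dom}
    (he : MapsTo e (A'.map (mk' p.dom)) (B'.map (mk' p'.dom)))
    (hee : LeftInvOn e' e (A'.map (mk' p.dom)))
    (hc : (A'.map (mk' p.dom) : Set (K ⧸ p.dom)).Countable) :
    (p.extend A' p'.dom e).AdmissibleWith (p'.extend B' p.dom e') where
  mapsTo x hx := mem_of_mk_mem_map hB <| by
    change ((extendFun p.dom p'.dom p.toFun e x : L) : L ⧸ p'.dom) ∈ _
    rw [mk_extendFun h.mapsTo]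
    exact he (AddSubgroup.mem_map_of_mem _ hx)
  leftInvOn x hx :=
    extendFun_extendFun h.mapsTo h.leftInvOn (hee (AddSubgroup.mem_map_of_mem _ hx))
  countable_displacements a _ :=
    countable_displacements_extendFun (S := (A' : Set K)) (B := p'.dom) (e := e)
      (by simpa using hc) h.countable_displacements a

end PartialMap

section CountableExtension

variable {K : Type u} [AddCommGroup K] {A : AddSubgroup K}

lemma infinite_quotient_of_mk_lt (hK : ℵ₀ < #K) (hA : #A < #K) : Infinite (K ⧸ A) := by
  rw [Cardinal.infinite_iff]
  by_contra! h
  have hK' := Cardinal.mk_congr (AddSubgroup.addGroupEquivQuotientProdAddSubgroup (s := A))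
  rw [Cardinal.mk_prod, Cardinal.lift_id, Cardinal.lift_id] at hK'
  exact (hK' ▸ Cardinal.mul_lt_of_lt hK.le (h.trans hK) hA).false

lemma countable_coe_closure {s : Set K} (hs : s.Countable) :
    (AddSubgroup.closure s : Set K).Countable := by
  have := hs.to_subtype
  refine (countable_range fun l : s →₀ ℤ => Finsupp.linearCombination ℤ Subtype.val l).mono ?_
  intro x hx
  rw [SetLike.mem_coe, ← Submodule.span_int_eq_addSubgroupClosure] at hx
  exact (Finsupp.mem_span_iff_linearCombination ℤ s x).1 hx

lemma exists_countable_extension {c : Cardinal.{u}} (hc : ℵ₀ ≤ c) (hA : #A ≤ c) (hcK : c < #K)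
    (g : K) : ∃ A' : AddSubgroup K, A ≤ A' ∧ g ∈ A' ∧ #A' ≤ c ∧
      (A'.map (mk' A) : Set (K ⧸ A)).Countable ∧ (A'.map (mk' A) : Set (K ⧸ A)).Infinite := by
  have := infinite_quotient_of_mk_lt (hc.trans_lt hcK) (hA.trans_lt hcK)
  let v := Infinite.natEmbedding (K ⧸ A)
  let C := AddSubgroup.closure (insert g (range fun n => (v n).out))
  have hC : (C : Set K).Countable := countable_coe_closure ((countable_range _).insert g)
  have hmap : (A ⊔ C).map (mk' A) = C.map (mk' A) := by
    rw [AddSubgroup.map_sup, (AddSubgroup.map_eq_bot_iff A).2 (ker_mk' A).ge, bot_sup_eq]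
  refine ⟨A ⊔ C, le_sup_left,
    (le_sup_right : C ≤ A ⊔ C) (AddSubgroup.subset_closure (mem_insert _ _)), ?_, ?_, ?_⟩
  · calc #(A ⊔ C : AddSubgroup K) = #((A : Set K) + (C : Set K)) := by
          rw [← AddSubgroup.add_normal]; rfl
      _ ≤ #A * #C := Cardinal.mk_add_le
      _ ≤ c * c := mul_le_mul' hA (hC.le_aleph0.trans hc)
      _ = c := Cardinal.mul_eq_self hc
  · rw [hmap, AddSubgroup.coe_map]
    exact hC.image _
  · rw [hmap]
    refine (infinite_range_of_injective v.injective).mono ?_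
    rintro - ⟨n, rfl⟩
    exact ⟨(v n).out, AddSubgroup.subset_closure (mem_insert_of_mem _ ⟨n, rfl⟩),
      QuotientAddGroup.out_eq' _⟩

end CountableExtension

lemma exists_invOn_of_equiv {α β : Type*} {s : Set α} {t : Set β} (E : s ≃ t) {a : α} {b : β}
    (ha : a ∈ s) (hb : b ∈ t) : ∃ (e : α → β) (e' : β → α),
      MapsTo e s t ∧ MapsTo e' t s ∧ InvOn e' e s t ∧ e a = b ∧ e' b = a := by
  classical
  let E₀ := E.trans (Equiv.swap (E ⟨a, ha⟩) ⟨b, hb⟩)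
  have hE₀ : E₀ ⟨a, ha⟩ = ⟨b, hb⟩ := Equiv.swap_apply_left (E ⟨a, ha⟩) _
  let e := Function.extend Subtype.val (fun x => (E₀ x : β)) fun _ => b
  let e' := Function.extend Subtype.val (fun y => (E₀.symm y : α)) fun _ => a
  have he (x : s) : e x = E₀ x := Subtype.val_injective.extend_apply _ _ x
  have he' (y : t) : e' y = E₀.symm y := Subtype.val_injective.extend_apply _ _ y
  refine ⟨e, e', fun x hx => ?_, fun y hy => ?_, ⟨fun x hx => ?_, fun y hy => ?_⟩, ?_, ?_⟩
  · rw [he ⟨x, hx⟩]; exact Subtype.coe_prop _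
  · rw [he' ⟨y, hy⟩]; exact Subtype.coe_prop _
  · rw [he ⟨x, hx⟩, he', Equiv.symm_apply_apply]
  · rw [he' ⟨y, hy⟩, he, Equiv.apply_symm_apply]
  · rw [he ⟨a, ha⟩, hE₀]
  · rw [he' ⟨b, hb⟩, ← hE₀, Equiv.symm_apply_apply]

open PartialMap

section Pairs

variable {K L : Type*} [AddCommGroup K] [AddCommGroup L]

def Admissible (P : PartialMap K L × PartialMap L K) : Prop :=
  P.1.AdmissibleWith P.2 ∧ P.2.AdmissibleWith P.1

noncomputable def glue₂ {ι : Type*} (Q : ι → PartialMap K L × PartialMap L K) :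
    PartialMap K L × PartialMap L K :=
  (glue fun i => (Q i).1, glue fun i => (Q i).2)

variable {ι : Type*} {Q : ι → PartialMap K L × PartialMap L K} (hQ : Directed (· ≤ ·) Q)
include hQ

lemma directed_fst : Directed (· ≤ ·) fun i => (Q i).1 :=
  Directed.mono_comp (· ≤ ·) (g := Prod.fst) monotone_fst hQ

lemma directed_snd : Directed (· ≤ ·) fun i => (Q i).2 :=
  Directed.mono_comp (· ≤ ·) (g := Prod.snd) monotone_snd hQ

lemma le_glue₂ (i : ι) : Q i ≤ glue₂ Q :=
  ⟨le_glue (directed_fst hQ) i, le_glue (directed_snd hQ) i⟩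

lemma admissible_glue₂ (h : ∀ i, Admissible (Q i)) : Admissible (glue₂ Q) :=
  ⟨AdmissibleWith.glue (directed_fst hQ) (directed_snd hQ) fun i => (h i).1,
    AdmissibleWith.glue (directed_snd hQ) (directed_fst hQ) fun i => (h i).2⟩

end Pairs

section Step

variable {K L : Type u} [AddCommGroup K] [AddCommGroup L]

lemma mk_glue_dom_le {ι : Type u} {Q : ι → PartialMap K L} (hQ : Directed (· ≤ ·) Q)
    {c : Cardinal.{u}} (hc : ℵ₀ ≤ c) (hι : #ι ≤ c) (hQc : ∀ i, #(Q i).dom ≤ c) :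
    #(glue Q).dom ≤ c := by
  rcases isEmpty_or_nonempty ι with hempty | hnonempty
  · rw [glue_of_isEmpty, Cardinal.mk_eq_one]
    exact Cardinal.one_le_aleph0.trans hc
  have hdom : ((glue Q).dom : Set K) = ⋃ i, ((Q i).dom : Set K) :=
    AddSubgroup.coe_iSup_of_directed (directed_dom hQ)
  calc #(glue Q).dom = #(⋃ i, ((Q i).dom : Set K)) := by rw [← hdom]; rfl
    _ ≤ #ι * ⨆ i, #(Q i).dom := Cardinal.mk_iUnion_le _
    _ ≤ c * c := mul_le_mul' hι (ciSup_le' hQc)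
    _ = c := Cardinal.mul_eq_self hc

structure IsStep (P : PartialMap K L × PartialMap L K) (g : K) (h : L) (c : Cardinal.{u})
    (Q : PartialMap K L × PartialMap L K) : Prop where
  le : P ≤ Q
  admissible : Admissible Q
  mem_fst : g ∈ Q.1.dom
  mem_snd : h ∈ Q.2.dom
  mk_fst_le : #Q.1.dom ≤ c
  mk_snd_le : #Q.2.dom ≤ c

lemma exists_isStep {P : PartialMap K L × PartialMap L K} (hP : Admissible P) {c : Cardinal.{u}}
    (hc : ℵ₀ ≤ c) (hcK : c < #K) (hcL : c < #L) (hP₁ : #P.1.dom ≤ c) (hP₂ : #P.2.dom ≤ c)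
    (g : K) (h : L) : ∃ Q, IsStep P g h c Q := by
  obtain ⟨A', hA, hgA, hA'c, hcA, hiA⟩ := exists_countable_extension hc hP₁ hcK g
  obtain ⟨B', hB, hhB, hB'c, hcB, hiB⟩ := exists_countable_extension hc hP₂ hcL h
  have := hcA.to_subtype; have := hiA.to_subtype; have := hcB.to_subtype; have := hiB.to_subtype
  obtain ⟨E⟩ := Cardinal.eq.1 <|
    (Cardinal.mk_eq_aleph0 (A'.map (mk' P.1.dom) : Set (K ⧸ P.1.dom))).trans
      (Cardinal.mk_eq_aleph0 (B'.map (mk' P.2.dom) : Set (L ⧸ P.2.dom))).symm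
  obtain ⟨e, e', he, he', hinv, he0, he'0⟩ :=
    exists_invOn_of_equiv E (zero_mem (A'.map (mk' P.1.dom))) (zero_mem (B'.map (mk' P.2.dom)))
  exact ⟨(P.1.extend A' P.2.dom e, P.2.extend B' P.1.dom e'),
    ⟨le_extend hA he0, le_extend hB he'0⟩,
    ⟨hP.1.extend hB he hinv.1 hcA, hP.2.extend hA he' hinv.2 hcB⟩, hgA, hhB, hA'c, hB'c⟩

open Classical in
noncomputable def step (P : PartialMap K L × PartialMap L K) (g : K) (h : L)
    (c : Cardinal.{u}) : PartialMap K L × PartialMap L K :=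
  if hQ : ∃ Q, IsStep P g h c Q then hQ.choose else P

lemma le_step (P : PartialMap K L × PartialMap L K) (g : K) (h : L) (c : Cardinal.{u}) :
    P ≤ step P g h c := by
  unfold step
  split_ifs with hQ
  exacts [hQ.choose_spec.le, le_rfl]

lemma isStep_step {P : PartialMap K L × PartialMap L K} {g : K} {h : L} {c : Cardinal.{u}}
    (hQ : ∃ Q, IsStep P g h c Q) : IsStep P g h c (step P g h c) := by
  rw [step, dif_pos hQ]
  exact hQ.choose_spec

end Step

section Construction

variable {K L T : Type u} [AddCommGroup K] [AddCommGroup L] [LinearOrder T] [WellFoundedLT T]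
  (gK : T → K) (gL : T → L)

noncomputable def stage : T → PartialMap K L × PartialMap L K :=
  WellFoundedLT.fix fun a stage =>
    step (glue₂ fun b : Iio a => stage b b.2) (gK a) (gL a) (#(Iio a) + ℵ₀)

lemma stage_eq (a : T) : stage gK gL a =
    step (glue₂ fun b : Iio a => stage gK gL b) (gK a) (gL a) (#(Iio a) + ℵ₀) :=
  WellFoundedLT.fix_eq _ a

lemma glue₂_le_stage (a : T) : glue₂ (fun b : Iio a => stage gK gL b) ≤ stage gK gL a :=
  stage_eq gK gL a ▸ le_step _ _ _ _

lemma monotone_stage : Monotone (stage gK gL) := by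
  refine monotone_iff_forall_lt.2 fun b a hba => ?_
  induction a using WellFoundedLT.induction generalizing b with
  | _ a ih =>
    have hmono : Monotone fun b : Iio a => stage gK gL b :=
      monotone_iff_forall_lt.2 fun b b' hbb' => ih b' b'.2 b hbb'
    exact (le_glue₂ hmono.directed_le ⟨b, hba⟩).trans (glue₂_le_stage gK gL a)

lemma isStep_stage (hK : ℵ₀ < #K) (hKL : #K = #L) (hT : ∀ a : T, #(Iio a) < #K) (a : T) :
    IsStep (glue₂ fun b : Iio a => stage gK gL b) (gK a) (gL a) (#(Iio a) + ℵ₀)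
      (stage gK gL a) := by
  induction a using WellFoundedLT.induction with
  | _ a ih =>
    have hdir : Directed (· ≤ ·) fun b : Iio a => stage gK gL b :=
      (monotone_stage gK gL).comp (Subtype.mono_coe _) |>.directed_le
    have hc : ℵ₀ ≤ #(Iio a) + ℵ₀ := le_add_self
    have hcK : #(Iio a) + ℵ₀ < #K := Cardinal.add_lt_of_lt hK.le (hT a) hK
    have hmono (b : Iio a) : #(Iio b.1) + ℵ₀ ≤ #(Iio a) + ℵ₀ :=
      add_le_add (Cardinal.mk_le_mk_of_subset (Iio_subset_Iio b.2.le)) le_rfl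
    have hfst := mk_glue_dom_le (directed_fst hdir) hc le_self_add fun b =>
      (ih b b.2).mk_fst_le.trans (hmono b)
    have hsnd := mk_glue_dom_le (directed_snd hdir) hc le_self_add fun b =>
      (ih b b.2).mk_snd_le.trans (hmono b)
    rw [stage_eq]
    exact isStep_step <| exists_isStep (admissible_glue₂ hdir fun b => (ih b b.2).admissible)
      hc hcK (hKL ▸ hcK) hfst hsnd (gK a) (gL a)

end Construction

lemma exists_equiv_of_admissible {K L : Type*} [AddCommGroup K] [AddCommGroup L]
    {P : PartialMap K L × PartialMap L K} (hP : Admissible P)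
    (h₁ : ∀ x, x ∈ P.1.dom) (h₂ : ∀ y, y ∈ P.2.dom) :
    ∃ f : K ≃ L, (∀ a, (displacements f Set.univ a).Countable) ∧
      ∀ b, (displacements f.symm Set.univ b).Countable := by
  have hdom₁ : (P.1.dom : Set K) = Set.univ := eq_univ_of_forall h₁
  have hdom₂ : (P.2.dom : Set L) = Set.univ := eq_univ_of_forall h₂
  refine ⟨⟨P.1.toFun, P.2.toFun, fun x => hP.1.leftInvOn (h₁ x),
    fun y => hP.2.leftInvOn (h₂ y)⟩, fun a => ?_, fun b => ?_⟩
  · simpa [hdom₁] using hP.1.countable_displacements a (h₁ a)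
  · simpa [hdom₂] using hP.2.countable_displacements b (h₂ b)

theorem exists_equiv_countable_displacements {K L : Type u} [AddCommGroup K] [AddCommGroup L]
    (hK : ℵ₀ < #K) (hKL : #K = #L) :
    ∃ f : K ≃ L, (∀ a, (displacements f Set.univ a).Countable) ∧
      ∀ b, (displacements f.symm Set.univ b).Countable := by
  let T := (#K).ord.ToType
  have hT : #T = #K := by rw [Cardinal.mk_toType, Cardinal.card_ord]
  obtain ⟨eK⟩ := Cardinal.eq.1 hT
  obtain ⟨eL⟩ := Cardinal.eq.1 (hT.trans hKL)
  have hsmall (a : T) : #(Iio a) < #K :=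
    (Cardinal.mk_Iio_lt a (by rw [hT, Ordinal.type_toType])).trans_eq hT
  have hdir := (monotone_stage eK eL).directed_le
  have hstep := isStep_stage eK eL hK hKL hsmall
  refine exists_equiv_of_admissible (admissible_glue₂ hdir fun a => (hstep a).admissible)
    (fun x => ?_) (fun y => ?_)
  · simpa using dom_le_dom (le_glue₂ hdir (eK.symm x)).1 (hstep (eK.symm x)).mem_fst
  · simpa using dom_le_dom (le_glue₂ hdir (eL.symm y)).2 (hstep (eL.symm y)).mem_snd

end Asymorphism

theorem abelian_asymorphic_free_abelian_general (γ κ : Cardinal.{u})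
    (hγ : ℵ₀ < γ) (hκ : ℵ₀ < κ)
    (G : Type u) [AddCommGroup G] (hG : #G = γ)
    (ι : Type u) (hι : #ι = γ) :
    ∃ f : G ≃ (ι →₀ ℤ), IsAddAsymorphism κ f := by
  have : Infinite ι := Cardinal.infinite_iff.2 (hι ▸ hγ.le)
  have hfree : #G = #(ι →₀ ℤ) := by
    rw [Cardinal.mk_finsupp_lift_of_infinite, Cardinal.mk_int, Cardinal.lift_uzero,
      Cardinal.lift_aleph0, hι, hG, max_eq_left hγ.le]
  obtain ⟨f, hf, hf'⟩ := Asymorphism.exists_equiv_countable_displacements (hG ▸ hγ) hfree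
  exact ⟨f, Asymorphism.isAddAsymorphism_of_countable_displacements hκ f hf hf'⟩

/-- Every Abelian group of uncountable cardinality `γ` is `κ`-asymorphic to the free
Abelian group of rank `γ` (the direct sum of `γ` copies of `ℤ`), for any `ℵ₀ < κ ≤ γ`. -/
theorem abelian_asymorphic_free_abelian (γ κ : Cardinal.{u})
    (hγ : ℵ₀ < γ) (hκ : ℵ₀ < κ) (hκγ : κ ≤ γ)
    (G : Type u) [AddCommGroup G] (hG : #G = γ)
    (ι : Type u) (hι : #ι = γ) :
    ∃ f : G ≃ (ι →₀ ℤ), IsAddAsymorphism κ f :=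
  abelian_asymorphic_free_abelian_general γ κ hγ hκ G hG ι hι
end

section
/- Let γ be an uncountable cardinal and κ a cardinal with ℵ₀ < κ ≤ γ. Then any two Abelian groups of cardinality γ are κ-asymorphic. -/
/-!
Filter each group by an increasing chain of subgroups `A β` indexed by ordinals, continuous at
limits, whose layers `A (β + 1) / A β` are countably infinite below `(#G).ord` and trivial above.
After fixing representatives of every layer, each element is a finite sum of representatives of
strictly decreasing levels; matching the layers of `G` and `H` by bijections turns these
expansions into a bijection `f : G ≃ H`. Adding `a` changes only the part of the expansion of `x`
at levels up to that of `a`, and the carry into each lower level is one of countably many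
elements, so by induction on the level of `a` the displacement set `{f (a + x) - f x}` is
countable. Countable displacement sets make `f` a `κ`-asymorphism for every `κ > ℵ₀`.
-/

open Cardinal Pointwise

universe u

open Set Order

theorem Cardinal.mk_biUnion_lt_of_countable {α β : Type u} {κ : Cardinal.{u}} (hκ : ℵ₀ < κ)
    {X : Set α} (hX : #X < κ) {S : α → Set β} (hS : ∀ a, (S a).Countable) :
    #(⋃ a ∈ X, S a) < κ :=
  calc #(⋃ a ∈ X, S a) ≤ #X * ⨆ a : X, #(S a) := mk_biUnion_le _ _
    _ ≤ #X * ℵ₀ := by gcongr; exact ciSup_le' fun a => (hS a).le_aleph0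
    _ < κ := mul_lt_of_lt hκ.le hX hκ

section Displacement

variable {G H : Type u} [AddGroup G] [AddGroup H]

def displacement (f : G → H) (a : G) : Set H :=
  range fun x => f (a + x) - f x

theorem displacement_zero_subset (f : G → H) : displacement f 0 ⊆ {0} := by
  rintro _ ⟨x, rfl⟩
  simp

theorem image_add_singleton_subset (f : G → H) (X : Set G) (x : G) :
    f '' (X + {x}) ⊆ (⋃ a ∈ X, displacement f a) + {f x} := by
  rintro _ ⟨_, ⟨a, ha, y, hy, rfl⟩, rfl⟩
  obtain rfl : y = x := hy
  exact ⟨_, mem_biUnion ha ⟨y, rfl⟩, _, rfl, sub_add_cancel _ _⟩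

theorem isAddAsymorphism_of_countable_displacement {κ : Cardinal.{u}} (hκ : ℵ₀ < κ) (f : G ≃ H)
    (hf : ∀ a, (displacement f a).Countable) (hf' : ∀ b, (displacement f.symm b).Countable) :
    IsAddAsymorphism κ f := fun X Y hX hY =>
  ⟨⋃ b ∈ Y, displacement f.symm b, ⋃ a ∈ X, displacement f a,
    mk_biUnion_lt_of_countable hκ hY hf', mk_biUnion_lt_of_countable hκ hX hf,
    image_add_singleton_subset f X, image_add_singleton_subset f.symm Y⟩

end Displacement

section Filtration

variable {G : Type u} [AddGroup G]

/-- The field `exists_lt_mem_succ` says that `A 0 = ⊥` and `A λ = ⋃ β < λ, A β` for limit `λ`. -/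
structure IsOrdinalFiltration (A : Ordinal.{u} → AddSubgroup G) : Prop where
  monotone : Monotone A
  exists_mem_succ (x : G) : ∃ β, x ∈ A (succ β)
  exists_lt_mem_succ {α : Ordinal.{u}} {x : G} : x ∈ A α → x ≠ 0 → ∃ β < α, x ∈ A (succ β)

noncomputable def level (A : Ordinal.{u} → AddSubgroup G) (x : G) : Ordinal.{u} :=
  sInf {β | x ∈ A (succ β)}

variable {A : Ordinal.{u} → AddSubgroup G}

theorem level_le {x : G} {β : Ordinal.{u}} (h : x ∈ A (succ β)) : level A x ≤ β :=
  csInf_le' h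

namespace IsOrdinalFiltration

theorem induction (hA : IsOrdinalFiltration A) {P : G → Prop} (zero : P 0)
    (step : ∀ β, (∀ y ∈ A β, P y) → ∀ x ∈ A (succ β), P x) (x : G) : P x := by
  have key (α : Ordinal.{u}) : ∀ y ∈ A α, P y := by
    induction α using WellFoundedLT.induction with | _ α ih
    intro y hy
    obtain rfl | hy0 := eq_or_ne y 0
    · exact zero
    obtain ⟨β, hβα, hyβ⟩ := hA.exists_lt_mem_succ hy hy0
    exact step β (ih β hβα) y hyβ
  obtain ⟨β, hβ⟩ := hA.exists_mem_succ x
  exact key _ x hβ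

theorem lt_of_mem_of_notMem (hA : IsOrdinalFiltration A) {α β : Ordinal.{u}} {x : G}
    (hα : x ∈ A α) (hβ : x ∉ A β) : β < α :=
  lt_of_not_ge fun h => hβ (hA.monotone h hα)

theorem mem_succ_level (hA : IsOrdinalFiltration A) (x : G) : x ∈ A (succ (level A x)) :=
  csInf_mem (hA.exists_mem_succ x)

theorem level_lt (hA : IsOrdinalFiltration A) {x : G} {α : Ordinal.{u}} (h : x ∈ A α)
    (hx : x ≠ 0) : level A x < α :=
  let ⟨_, hβα, hxβ⟩ := hA.exists_lt_mem_succ h hx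
  (level_le hxβ).trans_lt hβα

theorem level_eq (hA : IsOrdinalFiltration A) {x : G} {β : Ordinal.{u}} (h : x ∈ A (succ β))
    (h' : x ∉ A β) : level A x = β :=
  (level_le h).antisymm <| le_of_lt_succ (hA.lt_of_mem_of_notMem (hA.mem_succ_level x) h')

end IsOrdinalFiltration

end Filtration

section Digits

variable {G : Type u} [AddCommGroup G] (A : Ordinal.{u} → AddSubgroup G)

def layer (β : Ordinal.{u}) : AddSubgroup (G ⧸ A β) :=
  (A (succ β)).map (QuotientAddGroup.mk' (A β))

open scoped Classical in
noncomputable def layerRep (β : Ordinal.{u}) (q : layer A β) : G :=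
  if q = 0 then 0 else (AddSubgroup.mem_map.mp q.2).choose

open scoped Classical in
noncomputable def digit (β : Ordinal.{u}) (x : G) : layer A β :=
  if h : (x : G ⧸ A β) ∈ layer A β then ⟨x, h⟩ else 0

variable {A} {β : Ordinal.{u}}

@[simp]
theorem layerRep_zero : layerRep A β 0 = 0 :=
  if_pos rfl

theorem layerRep_mem (q : layer A β) : layerRep A β q ∈ A (succ β) := by
  unfold layerRep
  split_ifs
  exacts [zero_mem _, (AddSubgroup.mem_map.mp q.2).choose_spec.1]

theorem coe_layerRep (q : layer A β) : ((layerRep A β q : G) : G ⧸ A β) = q := by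
  unfold layerRep
  split_ifs with hq
  · simp [hq]
  · exact (AddSubgroup.mem_map.mp q.2).choose_spec.2

theorem mem_layer {x : G} (hx : x ∈ A (succ β)) : (x : G ⧸ A β) ∈ layer A β :=
  ⟨x, hx, rfl⟩

theorem digit_congr {x y : G} (h : (x : G ⧸ A β) = y) : digit A β x = digit A β y := by
  unfold digit
  generalize (x : G ⧸ A β) = q at h
  subst h
  rfl

theorem digit_of_mem {x : G} (hx : x ∈ A β) : digit A β x = 0 := by
  rw [digit_congr ((QuotientAddGroup.eq_zero_iff x).mpr hx)]
  simp [digit]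

theorem digit_add_of_mem {a : G} (ha : a ∈ A β) (x : G) : digit A β (a + x) = digit A β x :=
  digit_congr <| by simp [(QuotientAddGroup.eq_zero_iff a).mpr ha]

theorem coe_digit {x : G} (hx : x ∈ A (succ β)) : (digit A β x : G ⧸ A β) = x := by
  rw [digit, dif_pos (mem_layer hx)]

theorem digit_layerRep (q : layer A β) : digit A β (layerRep A β q) = q := by
  rw [digit, dif_pos (by rw [coe_layerRep]; exact q.2)]
  exact Subtype.ext (coe_layerRep q)

theorem sub_layerRep_digit_mem {x : G} (hx : x ∈ A (succ β)) :
    x - layerRep A β (digit A β x) ∈ A β := by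
  rw [← QuotientAddGroup.eq_zero_iff, QuotientAddGroup.mk_sub, coe_layerRep, coe_digit hx, sub_self]

end Digits

section LayerwiseMap

variable {G H : Type u} [AddCommGroup G] [AddCommGroup H]
  {A : Ordinal.{u} → AddSubgroup G} {B : Ordinal.{u} → AddSubgroup H}

open scoped Classical in
noncomputable def layerwiseMap (hA : IsOrdinalFiltration A) (e : ∀ β, layer A β ≃ layer B β)
    (x : G) : H :=
  if x = 0 then 0 else
    let β := level A x
    let y := x - layerRep A β (digit A β x)
    -- `level A 0 = 0`, so the recursion must stop at `y = 0` for the level to decrease.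
    layerRep B β (e β (digit A β x)) + if hy : y = 0 then 0 else layerwiseMap hA e y
termination_by level A x
decreasing_by exact hA.level_lt (sub_layerRep_digit_mem (hA.mem_succ_level x)) hy

variable (hA : IsOrdinalFiltration A) (e : ∀ β, layer A β ≃ layer B β)

@[simp]
theorem layerwiseMap_zero : layerwiseMap hA e 0 = 0 := by
  rw [layerwiseMap, if_pos rfl]

theorem layerwiseMap_of_mem_succ (he : ∀ β, e β 0 = 0) {β : Ordinal.{u}} {x : G}
    (hx : x ∈ A (succ β)) :
    layerwiseMap hA e x =
      layerRep B β (e β (digit A β x)) + layerwiseMap hA e (x - layerRep A β (digit A β x)) := by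
  by_cases hxβ : x ∈ A β
  · simp [digit_of_mem hxβ, he]
  have hx0 : x ≠ 0 := by rintro rfl; exact hxβ (zero_mem _)
  obtain rfl := hA.level_eq hx hxβ
  rw [layerwiseMap, if_neg hx0]
  dsimp only
  split_ifs with hy
  · rw [hy, layerwiseMap_zero]
  · rfl

theorem layerwiseMap_mem (hB : Monotone B) (he : ∀ β, e β 0 = 0) {α : Ordinal.{u}} {x : G}
    (hx : x ∈ A α) : layerwiseMap hA e x ∈ B α := by
  induction x using hA.induction generalizing α with
  | zero => simp
  | step β ih x hxβ =>
    by_cases hx' : x ∈ A β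
    · exact ih x hx' hx
    have hβα : β < α := hA.lt_of_mem_of_notMem hx hx'
    rw [layerwiseMap_of_mem_succ hA e he hxβ]
    exact add_mem (hB (succ_le_of_lt hβα) (layerRep_mem _))
      (ih _ (sub_layerRep_digit_mem hxβ) (hA.monotone hβα.le (sub_layerRep_digit_mem hxβ)))

theorem layerwiseMap_symm_layerwiseMap (hB : IsOrdinalFiltration B) (he : ∀ β, e β 0 = 0)
    (x : G) : layerwiseMap hB (fun β => (e β).symm) (layerwiseMap hA e x) = x := by
  have he' (β : Ordinal.{u}) : (e β).symm 0 = 0 := (e β).symm_apply_eq.mpr (he β).symm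
  induction x using hA.induction with
  | zero => simp
  | step β ih x hx =>
    set y := x - layerRep A β (digit A β x)
    have hy : y ∈ A β := sub_layerRep_digit_mem hx
    have hFx := layerwiseMap_of_mem_succ hA e he hx
    have hdigit : digit B β (layerwiseMap hA e x) = e β (digit A β x) := by
      rw [hFx, add_comm, digit_add_of_mem (layerwiseMap_mem hA e hB.monotone he hy),
        digit_layerRep]
    rw [layerwiseMap_of_mem_succ hB _ he' (layerwiseMap_mem hA e hB.monotone he hx), hdigit,
      Equiv.symm_apply_apply, hFx, add_sub_cancel_left, ih y hy, add_sub_cancel]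

theorem displacement_layerwiseMap_subset (he : ∀ β, e β 0 = 0) {α : Ordinal.{u}} {a : G}
    (ha : a ∈ A α) :
    displacement (layerwiseMap hA e) a ⊆
      (fun u => layerwiseMap hA e (a + u) - layerwiseMap hA e u) '' A α := by
  rintro _ ⟨x, rfl⟩
  induction x using hA.induction with
  | zero => exact ⟨0, zero_mem _, rfl⟩
  | step β ih x hx =>
    by_cases hxα : x ∈ A α
    · exact ⟨x, hxα, rfl⟩
    have haβ : a ∈ A β := hA.monotone (le_of_lt_succ (hA.lt_of_mem_of_notMem hx hxα)) ha
    beta_reduce at ih ⊢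
    rw [layerwiseMap_of_mem_succ hA e he (add_mem (hA.monotone (le_succ β) haβ) hx),
      layerwiseMap_of_mem_succ hA e he hx, digit_add_of_mem haβ, add_sub_assoc a,
      add_sub_add_left_eq_sub]
    exact ih _ (sub_layerRep_digit_mem hx)

theorem countable_displacement_layerwiseMap (he : ∀ β, e β 0 = 0)
    (hc : ∀ β, Countable (layer A β)) (a : G) :
    (displacement (layerwiseMap hA e) a).Countable := by
  induction a using hA.induction with
  | zero => exact (countable_singleton 0).mono (displacement_zero_subset _)
  | step β ih a ha =>
    have hR : (range (layerRep A β)).Countable := countable_range _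
    have hS : (range fun q => layerRep B β (e β q)).Countable := countable_range _
    /- The carry into level `β` is one of the countably many `a + t - t'` with `t, t'` layer
    representatives. -/
    set C := {c ∈ A β | c ∈ image2 (fun t t' => a + t - t') (range (layerRep A β))
      (range (layerRep A β))}
    have hC : C.Countable := (hR.image2 hR _).mono fun _ hc => hc.2
    refine ((hS.image2 hS (· - ·)).image2 (hC.biUnion fun c hc => ih c hc.1) (· + ·)).mono ?_
    intro d hd
    obtain ⟨u, hu, rfl⟩ := displacement_layerwiseMap_subset hA e he ha hd
    have hau : a + u ∈ A (succ β) := add_mem ha hu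
    beta_reduce
    rw [layerwiseMap_of_mem_succ hA e he hau, layerwiseMap_of_mem_succ hA e he hu]
    set ρ : G → G := fun x => layerRep A β (digit A β x)
    have hsplit : a + u - ρ (a + u) = (a + ρ u - ρ (a + u)) + (u - ρ u) := by abel
    have hcarry : a + ρ u - ρ (a + u) ∈ C := by
      refine ⟨?_, mem_image2_of_mem (mem_range_self _) (mem_range_self _)⟩
      have := sub_mem (sub_layerRep_digit_mem hau) (sub_layerRep_digit_mem hu)
      rwa [hsplit, add_sub_cancel_right] at this
    refine ⟨_, mem_image2_of_mem (mem_range_self (digit A β (a + u)))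
      (mem_range_self (digit A β u)), _, mem_biUnion hcarry ⟨u - ρ u, rfl⟩, ?_⟩
    beta_reduce
    rw [← hsplit]
    abel

end LayerwiseMap

theorem exists_equiv_apply_eq {α β : Type u} (h : #α = #β) (a : α) (b : β) :
    ∃ e : α ≃ β, e a = b := by
  classical
  obtain ⟨e⟩ := Cardinal.eq.mp h
  exact ⟨e.trans (Equiv.swap (e a) b), by simp⟩

theorem exists_equiv_countable_displacement {G H : Type u} [AddCommGroup G] [AddCommGroup H]
    {A : Ordinal.{u} → AddSubgroup G} {B : Ordinal.{u} → AddSubgroup H}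
    (hA : IsOrdinalFiltration A) (hB : IsOrdinalFiltration B)
    (hcard : ∀ β, #(layer A β) = #(layer B β)) (hc : ∀ β, Countable (layer A β)) :
    ∃ f : G ≃ H, (∀ a, (displacement f a).Countable) ∧ ∀ b, (displacement f.symm b).Countable := by
  choose e he using fun β => exists_equiv_apply_eq (hcard β) 0 0
  have he' (β : Ordinal.{u}) : (e β).symm 0 = 0 := (e β).symm_apply_eq.mpr (he β).symm
  have hc' (β : Ordinal.{u}) : Countable (layer B β) := by
    rw [← mk_le_aleph0_iff, ← hcard]
    exact mk_le_aleph0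
  let f : G ≃ H :=
    ⟨layerwiseMap hA e, layerwiseMap hB fun β => (e β).symm,
      layerwiseMap_symm_layerwiseMap hA e hB he,
      layerwiseMap_symm_layerwiseMap hB (fun β => (e β).symm) hA he'⟩
  exact ⟨f, countable_displacement_layerwiseMap hA e he hc,
    countable_displacement_layerwiseMap hB _ he' hc'⟩

theorem AddSubgroup.cardinalMk_closure_le_max {G : Type u} [AddGroup G] (S : Set G) :
    #(closure S) ≤ max #S ℵ₀ := by
  rw [FreeAddGroup.closure_eq_range]
  refine mk_range_le.trans ?_
  rcases isEmpty_or_nonempty S with _ | _ <;> simp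

theorem AddSubgroup.infinite_quotient_of_cardinalMk_lt {G : Type u} [AddGroup G]
    {K : AddSubgroup G} (hG : ℵ₀ ≤ #G) (hK : #K < #G) : Infinite (G ⧸ K) := by
  by_contra hfin
  have hGK : #G = #(G ⧸ K) * #K := by
    rw [mk_congr K.addGroupEquivQuotientProdAddSubgroup, mk_prod, lift_id, lift_id]
  rw [not_infinite_iff_finite] at hfin
  have := mul_lt_of_lt hG ((lt_aleph0_of_finite (G ⧸ K)).trans_le hG) hK
  exact (hGK ▸ this).false

theorem exists_surjOn_Iio_ord (G : Type u) [Nonempty G] :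
    ∃ g : Ordinal.{u} → G, SurjOn g (Iio (#G).ord) univ := by
  obtain ⟨e⟩ : Nonempty (G ≃ (#G).ord.ToType) := Cardinal.eq.mp (by simp)
  let f : G → Ordinal.{u} := fun x => (Ordinal.ToType.mk.symm (e x)).1
  have hf : f.Injective :=
    Subtype.val_injective.comp (Ordinal.ToType.mk.symm.injective.comp e.injective)
  exact ⟨Function.invFun f, fun x _ =>
    ⟨f x, (Ordinal.ToType.mk.symm (e x)).2, Function.leftInverse_invFun hf x⟩⟩

section Construction

variable {G : Type u} [AddCommGroup G]

open scoped Classical in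
noncomputable def cosetSample (K : AddSubgroup G) : Set G :=
  if h : Infinite (G ⧸ K) then range fun n => (@Infinite.natEmbedding _ h n).out else ∅

theorem countable_cosetSample (K : AddSubgroup G) : (cosetSample K).Countable := by
  unfold cosetSample
  split_ifs
  exacts [countable_range _, countable_empty]

theorem infinite_image_cosetSample (K : AddSubgroup G) [h : Infinite (G ⧸ K)] :
    ((fun x : G => (x : G ⧸ K)) '' cosetSample K).Infinite := by
  refine (infinite_range_of_injective (Infinite.natEmbedding (G ⧸ K)).injective).mono ?_
  rintro _ ⟨n, rfl⟩
  rw [cosetSample, dif_pos h]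
  exact ⟨_, mem_range_self n, QuotientAddGroup.out_eq' _⟩

/-- Adding `cosetSample` at each step makes the layers below `(#G).ord` infinite. -/
noncomputable def enumChain (g : Ordinal.{u} → G) (α : Ordinal.{u}) : AddSubgroup G :=
  AddSubgroup.closure (⋃ β < α, insert (g β) (cosetSample (enumChain g β)))
termination_by α

variable (g : Ordinal.{u} → G)

theorem subset_enumChain {β α : Ordinal.{u}} (h : β < α) :
    insert (g β) (cosetSample (enumChain g β)) ⊆ enumChain g α := by
  rw [enumChain.eq_1 g α]
  exact (subset_biUnion_of_mem (u := fun β => insert (g β) (cosetSample (enumChain g β))) h).trans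
    AddSubgroup.subset_closure

theorem enumChain_monotone : Monotone (enumChain g) := by
  intro β α h
  rw [enumChain.eq_1 g β, AddSubgroup.closure_le]
  exact iUnion₂_subset fun δ hδ => subset_enumChain g (hδ.trans_le h)

theorem enumChain_succ_le (β : Ordinal.{u}) :
    enumChain g (succ β) ≤
      enumChain g β ⊔ AddSubgroup.closure (insert (g β) (cosetSample (enumChain g β))) := by
  rw [enumChain.eq_1 g (succ β), AddSubgroup.closure_le]
  refine iUnion₂_subset fun δ hδ => ?_
  obtain hδβ | rfl := (le_of_lt_succ hδ).lt_or_eq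
  · exact (subset_enumChain g hδβ).trans (SetLike.coe_subset_coe.mpr le_sup_left)
  · exact AddSubgroup.subset_closure.trans (SetLike.coe_subset_coe.mpr le_sup_right)

theorem enumChain_le_iSup (α : Ordinal.{u}) :
    enumChain g α ≤ ⨆ β : Iio α, enumChain g (succ β) := by
  rw [enumChain.eq_1 g α, AddSubgroup.closure_le]
  exact iUnion₂_subset fun β hβ => (subset_enumChain g (lt_succ β)).trans
    (SetLike.coe_subset_coe.mpr (le_iSup (fun β : Iio α => enumChain g (succ β)) ⟨β, hβ⟩))

theorem isOrdinalFiltration_enumChain (hg : g.Surjective) :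
    IsOrdinalFiltration (enumChain g) where
  monotone := enumChain_monotone g
  exists_mem_succ x := by
    obtain ⟨β, rfl⟩ := hg x
    exact ⟨β, subset_enumChain g (lt_succ β) (mem_insert _ _)⟩
  exists_lt_mem_succ {α x} hx hx0 := by
    have hx' := enumChain_le_iSup g α hx
    cases isEmpty_or_nonempty (Iio α)
    · rw [iSup_of_empty, AddSubgroup.mem_bot] at hx'
      exact absurd hx' hx0
    have hdir : Directed (· ≤ ·) fun β : Iio α => enumChain g (succ β) :=
      Monotone.directed_le fun _ _ h => enumChain_monotone g (succ_le_succ h)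
    obtain ⟨⟨β, hβ⟩, hxβ⟩ := (AddSubgroup.mem_iSup_of_directed hdir).mp hx'
    exact ⟨β, hβ, hxβ⟩

theorem cardinalMk_enumChain_le (α : Ordinal.{u}) : #(enumChain g α) ≤ max α.card ℵ₀ := by
  rw [enumChain.eq_1 g α]
  refine (AddSubgroup.cardinalMk_closure_le_max _).trans (max_le ?_ (le_max_right _ _))
  exact mk_biUnion_le_of_le (le_max_left _ _) (le_max_right _ _) _ fun β _ =>
    ((countable_cosetSample _).insert _).le_aleph0.trans (le_max_right _ _)

theorem countable_layer_enumChain (β : Ordinal.{u}) : Countable (layer (enumChain g) β) := by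
  set S := insert (g β) (cosetSample (enumChain g β))
  have hS : Countable (AddSubgroup.closure S) := by
    rw [← mk_le_aleph0_iff]
    exact (AddSubgroup.cardinalMk_closure_le_max S).trans
      (max_le ((countable_cosetSample _).insert _).le_aleph0 le_rfl)
  have hle : layer (enumChain g) β ≤ (AddSubgroup.closure S).map (QuotientAddGroup.mk' _) := by
    refine (AddSubgroup.map_mono (enumChain_succ_le g β)).trans_eq ?_
    rw [AddSubgroup.map_sup, QuotientAddGroup.map_mk'_self, bot_sup_eq]
  exact (((countable_range (fun x : AddSubgroup.closure S => (x : G ⧸ enumChain g β))).mono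
    (by rintro _ ⟨x, hx, rfl⟩; exact ⟨⟨x, hx⟩, rfl⟩)).mono hle).to_subtype

theorem infinite_layer_enumChain {β : Ordinal.{u}} [Infinite (G ⧸ enumChain g β)] :
    Infinite (layer (enumChain g) β) :=
  ((infinite_image_cosetSample _).mono <| image_mono fun _ hx =>
    subset_enumChain g (lt_succ β) (mem_insert_of_mem _ hx)).to_subtype

end Construction

theorem exists_isOrdinalFiltration_cardinalMk_layer {G : Type u} [AddCommGroup G] (hG : ℵ₀ < #G) :
    ∃ A : Ordinal.{u} → AddSubgroup G, IsOrdinalFiltration A ∧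
      ∀ β, #(layer A β) = if β < (#G).ord then ℵ₀ else 1 := by
  obtain ⟨g, hg⟩ := exists_surjOn_Iio_ord G
  refine ⟨enumChain g, isOrdinalFiltration_enumChain g hg.surjective, fun β => ?_⟩
  have := countable_layer_enumChain g β
  split_ifs with hβ
  · have : Infinite (G ⧸ enumChain g β) := AddSubgroup.infinite_quotient_of_cardinalMk_lt hG.le
      ((cardinalMk_enumChain_le g β).trans_lt (max_lt (lt_ord.mp hβ) hG))
    have := infinite_layer_enumChain g (β := β)
    exact mk_eq_aleph0 _
  · have htop : enumChain g β = ⊤ := eq_top_iff.mpr fun x _ => by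
      obtain ⟨δ, hδ, rfl⟩ := hg (mem_univ x)
      exact subset_enumChain g (hδ.trans_le (not_lt.mp hβ)) (mem_insert _ _)
    have : Subsingleton (G ⧸ enumChain g β) := QuotientAddGroup.subsingleton_iff.mpr htop
    have : Subsingleton (layer (enumChain g) β) :=
      ⟨fun a b => Subtype.ext (Subsingleton.elim _ _)⟩
    exact mk_eq_one _

theorem abelian_groups_asymorphic_general (γ κ : Cardinal.{u})
    (hγ : ℵ₀ < γ) (hκ : ℵ₀ < κ)
    (G : Type u) [AddCommGroup G] (hG : #G = γ)
    (H : Type u) [AddCommGroup H] (hH : #H = γ) :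
    ∃ f : G ≃ H, IsAddAsymorphism κ f := by
  subst hG
  obtain ⟨A, hA, hAlayer⟩ := exists_isOrdinalFiltration_cardinalMk_layer hγ
  obtain ⟨B, hB, hBlayer⟩ := exists_isOrdinalFiltration_cardinalMk_layer (hH ▸ hγ)
  have hcount (β : Ordinal.{u}) : Countable (layer A β) := by
    rw [← mk_le_aleph0_iff, hAlayer]
    split_ifs
    exacts [le_rfl, one_le_aleph0]
  obtain ⟨f, hf, hf'⟩ := exists_equiv_countable_displacement hA hB
    (fun β => by rw [hAlayer, hBlayer, hH]) hcount
  exact ⟨f, isAddAsymorphism_of_countable_displacement hκ f hf hf'⟩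

/-- Any two Abelian groups of the same uncountable cardinality `γ` are `κ`-asymorphic,
for any cardinal `κ` with `ℵ₀ < κ ≤ γ`. -/
theorem abelian_groups_asymorphic (γ κ : Cardinal.{u})
    (hγ : ℵ₀ < γ) (hκ : ℵ₀ < κ) (hκγ : κ ≤ γ)
    (G : Type u) [AddCommGroup G] (hG : #G = γ)
    (H : Type u) [AddCommGroup H] (hH : #H = γ) :
    ∃ f : G ≃ H, IsAddAsymorphism κ f :=
  abelian_groups_asymorphic_general γ κ hγ hκ G hG H hH
end

section
/- Let G be an Abelian group of cardinality γ > ℵ₀, let F_γ be the free group of rank γ, and let κ be a cardinal such that either ℵ₀ < κ < γ, or κ = γ and γ is singular. Then there is no ≺-mapping f : G → F_γ (with respect to κ) whose image is large, i.e., there exist no map f : G → F_γ and set K ∈ [F_γ]^{<κ} such that F_γ = K·f(G) and for every X ∈ [G]^{<κ} there exists Y ∈ [F_γ]^{<κ} with f(X·x) ⊆ Y·f(x) for all x ∈ G. -/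
/-!
Write `Δ a x = shiftQuot f a x = f (a * x) * (f x)⁻¹`. The `≺` condition says that `Δ` takes
fewer than `κ` values on `X × G` for every small `X`, and largeness of the image writes each
generator as `of i = k_i * f (g_i)` with `k_i ∈ K`. By transfinite recursion choose letters `j_α`,
`α < κ`, avoiding the letters of `K`, the earlier `j_β` and the letters of every `Δ (g_{j_β}) x`.
For a suitable letter `s` the values `Δ (g_s) (g_{j_β})` are then pairwise distinct: since `G` is
abelian, a coincidence for `β < β'` becomes an equation between two reduced words ending in the
distinct letters `s` and `j_{β'}`. If `κ < γ`, take `s` outside the at most `κ` letters used so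
far; there are `κ` indices `β` but fewer than `κ` values. If `κ = γ` is singular, take `s = j_α`
with `α` in a cofinal set `S` of size `cf κ`, so that all values lie in the small set
`Δ (g (j S)) G`, and with `α` so large that `β < α` still gives more indices than values.
-/

open Cardinal Pointwise Set

universe u

namespace FreeGroup

variable {α : Type*} [DecidableEq α]

def letters (w : FreeGroup α) : Set α := {a | ∃ b, (a, b) ∈ w.toWord}

theorem letters_finite (w : FreeGroup α) : w.letters.Finite :=
  (List.finite_toSet (w.toWord.map Prod.fst)).subset fun a ⟨b, hb⟩ ↦
    List.mem_map.2 ⟨(a, b), hb, rfl⟩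

theorem letters_mul_subset (u v : FreeGroup α) : (u * v).letters ⊆ u.letters ∪ v.letters :=
  fun _ ⟨b, hb⟩ ↦ (List.mem_append.1 ((toWord_mul_sublist u v).subset hb)).imp
    (⟨b, ·⟩) (⟨b, ·⟩)

theorem letters_inv_subset (u : FreeGroup α) : u⁻¹.letters ⊆ u.letters := by
  rintro a ⟨b, hb⟩
  simp only [toWord_inv, invRev, List.mem_reverse, List.mem_map] at hb
  obtain ⟨⟨a', b'⟩, h, heq⟩ := hb
  obtain rfl : a' = a := congrArg Prod.fst heq
  exact ⟨b', h⟩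

@[simp]
theorem letters_of (a : α) : (of a).letters = {a} := by
  ext; simp [letters, toWord_of]

theorem toWord_mul_of_of_notMem_letters {u : FreeGroup α} {a : α} (h : a ∉ u.letters) :
    (u * of a).toWord = u.toWord ++ [(a, true)] := by
  rw [toWord_mul, toWord_of]
  refine IsReduced.reduce_eq ?_
  refine List.isChain_append.2 ⟨isReduced_toWord, List.isChain_singleton _, ?_⟩
  rintro ⟨a', b'⟩ hx y hy hxy
  obtain rfl : (a, true) = y := by simpa using hy
  obtain rfl : a' = a := hxy
  exact absurd ⟨b', List.mem_of_getLast? hx⟩ h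

theorem eq_of_mul_of_eq_mul_of {u v : FreeGroup α} {a b : α} (h : u * of a = v * of b)
    (ha : a ∉ u.letters) (hb : b ∉ v.letters) : a = b := by
  have := congrArg (List.getLast? ∘ toWord) h
  simp only [Function.comp, toWord_mul_of_of_notMem_letters ha,
    toWord_mul_of_of_notMem_letters hb, List.getLast?_concat, Option.some.injEq] at this
  exact congrArg Prod.fst this

theorem notMem_letters_mul {u v : FreeGroup α} {a : α} (hu : a ∉ u.letters)
    (hv : a ∉ v.letters) : a ∉ (u * v).letters :=
  fun h ↦ (letters_mul_subset u v h).elim hu hv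

theorem notMem_letters_inv {u : FreeGroup α} {a : α} (hu : a ∉ u.letters) : a ∉ u⁻¹.letters :=
  fun h ↦ hu (letters_inv_subset u h)

def lettersOf (S : Set (FreeGroup α)) : Set α := ⋃ w ∈ S, w.letters

theorem letters_subset_lettersOf {S : Set (FreeGroup α)} {w : FreeGroup α} (hw : w ∈ S) :
    w.letters ⊆ lettersOf S :=
  subset_biUnion_of_mem hw

theorem mk_lettersOf_lt {α : Type u} [DecidableEq α] {S : Set (FreeGroup α)} {c : Cardinal}
    (hc : ℵ₀ < c) (hS : #S < c) : #(lettersOf S) < c := by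
  refine (mk_biUnion_le _ S).trans_lt (mul_lt_of_lt hc.le hS (lt_of_le_of_lt ?_ hc))
  exact ciSup_le' fun w ↦ (letters_finite w.1).lt_aleph0.le

end FreeGroup

section ShiftQuot

variable {G H : Type*} [Mul G] [Group H] (f : G → H)

def shiftQuot (a x : G) : H := f (a * x) * (f x)⁻¹

def shiftQuots (X : Set G) : Set H := image2 (shiftQuot f) X Set.univ

variable {f}

theorem shiftQuots_subset {X : Set G} {Y : Set H} (h : ∀ x, f '' (X * {x}) ⊆ Y * {f x}) :
    shiftQuots f X ⊆ Y := by
  rintro _ ⟨a, ha, x, -, rfl⟩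
  obtain ⟨y, hy, _, rfl, hyx⟩ := h x ⟨a * x, mul_mem_mul ha rfl, rfl⟩
  rwa [shiftQuot, ← hyx, mul_inv_cancel_right]

end ShiftQuot

theorem exists_mul_inv_mem_of_mul_range_eq_univ {G H : Type*} [Group H] {f : G → H} {K : Set H}
    (hK : K * range f = Set.univ) (h : H) : ∃ a, h * (f a)⁻¹ ∈ K := by
  obtain ⟨k, hk, _, ⟨a, rfl⟩, hka⟩ := mem_mul.1 (hK ▸ mem_univ h)
  exact ⟨a, by rwa [← hka, mul_inv_cancel_right]⟩

theorem exists_forall_notMem_image_Iio {W ι : Type u} [LinearOrder W] [WellFoundedLT W]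
    (T : Set ι → Set ι) (hT : ∀ α : W, ∀ E : Set ι, #E ≤ #(Iio α) → (T E)ᶜ.Nonempty) :
    ∃ j : W → ι, ∀ α, j α ∉ T (j '' Iio α) := by
  rcases isEmpty_or_nonempty W with hW | ⟨⟨α₀⟩⟩
  · exact ⟨isEmptyElim, isEmptyElim⟩
  have : Nonempty ι := (hT α₀ ∅ (by simp)).to_subtype.map Subtype.val
  let j : W → ι := wellFounded_lt.fix fun α rec ↦
    Classical.epsilon fun i ↦ i ∉ T (range fun β : Iio α ↦ rec β β.2)
  refine ⟨j, fun α ↦ ?_⟩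
  have hj : j α = Classical.epsilon fun i ↦ i ∉ T (j '' Iio α) := by
    rw [show j α = _ from wellFounded_lt.fix_eq _ α, image_eq_range]
  rw [hj]
  exact Classical.epsilon_spec (hT α _ mk_image_le)

theorem IsCofinal.exists_lt_mk_Iio {W : Type u} [LinearOrder W] {S : Set W} (hS : IsCofinal S)
    (hSW : #S < #W) (hW : ℵ₀ ≤ #W) {c : Cardinal} (hc : c < #W) :
    ∃ α ∈ S, c < #(Iio α) := by
  by_contra! h
  have hcover : ⋃ α ∈ S, Iic α = Set.univ :=
    eq_univ_of_forall fun w ↦ let ⟨α, hα, hwα⟩ := hS w; mem_biUnion hα hwα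
  have hIic : ⨆ α : S, #(Iic α.1) ≤ c + 1 := ciSup_le' fun α ↦ by
    rw [← Iio_insert]; exact mk_insert_le.trans (by gcongr; exact h α α.2)
  have := calc #W = #(⋃ α ∈ S, Iic α) := by rw [hcover, mk_univ]
    _ ≤ #S * ⨆ α : S, #(Iic α.1) := mk_biUnion_le _ S
    _ ≤ #S * (c + 1) := by gcongr
  exact this.not_gt (mul_lt_of_lt hW hSW (add_lt_of_lt hW hc (one_lt_aleph0.trans_le hW)))

section FreshSeq

open FreeGroup

variable {G ι W : Type u} [CommGroup G] [DecidableEq ι] {f : G → FreeGroup ι}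
  {K : Set (FreeGroup ι)} {g : ι → G}

theorem eq_of_shiftQuot_eq (hg : ∀ i, of i * (f (g i))⁻¹ ∈ K) {i₁ i₂ s : ι}
    (heq : shiftQuot f (g s) (g i₁) = shiftQuot f (g s) (g i₂))
    (h₁ : i₂ ∉ (shiftQuot f (g i₁) (g s)).letters) (h₂ : s ∉ (shiftQuot f (g i₂) (g s)).letters)
    (hi₂ : i₂ ∉ lettersOf K) (hs : s ∉ lettersOf K) (hi : i₂ ≠ i₁) : i₂ = s := by
  by_contra hne
  have hK {a : ι} (ha : a ∉ lettersOf K) (i : ι) : a ∉ (of i * (f (g i))⁻¹).letters :=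
    fun h ↦ ha (letters_subset_lettersOf (hg i) h)
  have hof {a i : ι} (h : a ≠ i) : a ∉ (of i).letters := by simpa using h
  have hcomm : f (g s * g i₂) = f (g s * g i₁) * (f (g i₁))⁻¹ * f (g i₂) := by
    rw [shiftQuot, shiftQuot] at heq; rw [heq]; group
  -- both sides are `f (g i₂ * g s)`
  have key : (shiftQuot f (g i₂) (g s) * (of s * (f (g s))⁻¹)⁻¹) * of s =
      (shiftQuot f (g i₁) (g s) * (of s * (f (g s))⁻¹)⁻¹ * of s * (of i₁)⁻¹ *
        (of i₁ * (f (g i₁))⁻¹) * (of i₂ * (f (g i₂))⁻¹)⁻¹) * of i₂ := by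
    simp only [shiftQuot]
    rw [mul_comm (g i₁), mul_comm (g i₂), hcomm]
    group
  refine hne (eq_of_mul_of_eq_mul_of key ?_ ?_).symm
  · exact notMem_letters_mul h₂ (notMem_letters_inv (hK hs s))
  · refine notMem_letters_mul (notMem_letters_mul (notMem_letters_mul (notMem_letters_mul
      (notMem_letters_mul h₁ (notMem_letters_inv (hK hi₂ s))) (hof hne))
      (notMem_letters_inv (hof hi))) (hK hi₂ i₁)) (notMem_letters_inv (hK hi₂ i₂))

variable [LinearOrder W]

variable (f K g) in
def IsFreshSeq (j : W → ι) : Prop :=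
  ∀ α, j α ∉ lettersOf K ∧ ∀ β < α, j β ≠ j α ∧ ∀ x, j α ∉ (shiftQuot f (g (j β)) x).letters

theorem IsFreshSeq.injOn_shiftQuot (hg : ∀ i, of i * (f (g i))⁻¹ ∈ K) {j : W → ι}
    (hj : IsFreshSeq f K g j) {s : ι} (hs : s ∉ lettersOf K) {B : Set W}
    (hB : ∀ β ∈ B, s ≠ j β ∧ s ∉ (shiftQuot f (g (j β)) (g s)).letters) :
    InjOn (fun β ↦ shiftQuot f (g s) (g (j β))) B := by
  intro β hβ β' hβ' heq
  by_contra hne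
  wlog hlt : β < β' generalizing β β'
  · exact this hβ' hβ heq.symm (Ne.symm hne) ((not_lt.1 hlt).lt_of_ne (Ne.symm hne))
  obtain ⟨hβ'K, hβ'prev⟩ := hj β'
  exact (hB β' hβ').1 (eq_of_shiftQuot_eq hg heq ((hβ'prev β hlt).2 (g s)) (hB β' hβ').2
    hβ'K hs (hβ'prev β hlt).1.symm).symm

theorem IsFreshSeq.mk_le_mk_shiftQuots (hg : ∀ i, of i * (f (g i))⁻¹ ∈ K) {j : W → ι}
    (hj : IsFreshSeq f K g j) {s : ι} (hs : s ∉ lettersOf K) {B : Set W}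
    (hB : ∀ β ∈ B, s ≠ j β ∧ s ∉ (shiftQuot f (g (j β)) (g s)).letters) {X : Set G}
    (hsX : g s ∈ X) : #B ≤ #(shiftQuots f X) := by
  rw [← mk_image_eq_of_injOn _ _ (hj.injOn_shiftQuot hg hs hB)]
  exact mk_le_mk_of_subset (image_subset_iff.2 fun β _ ↦ mem_image2_of_mem hsX (mem_univ _))

variable (g) in
theorem exists_isFreshSeq [WellFoundedLT W] {κ : Cardinal.{u}} (hκ : ℵ₀ < κ) (hκι : κ ≤ #ι)
    (hK : #K < κ) (hquot : ∀ X : Set G, #X < κ → #(shiftQuots f X) < κ)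
    (hW : ∀ α : W, #(Iio α) < κ) : ∃ j : W → ι, IsFreshSeq f K g j := by
  let T (E : Set ι) : Set ι := lettersOf K ∪ E ∪ lettersOf (shiftQuots f (g '' E))
  have hT (E : Set ι) (hE : #E < κ) : #(T E) < κ := by
    have hquotE := mk_lettersOf_lt hκ (hquot (g '' E) (mk_image_le.trans_lt hE))
    refine (mk_union_le _ _).trans_lt (add_lt_of_lt hκ.le ?_ hquotE)
    exact (mk_union_le _ _).trans_lt (add_lt_of_lt hκ.le (mk_lettersOf_lt hκ hK) hE)
  obtain ⟨j, hj⟩ := exists_forall_notMem_image_Iio T fun α E hE ↦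
    compl_nonempty_of_mk_lt_mk ((hT E (hE.trans_lt (hW α))).trans_le hκι)
  refine ⟨j, fun α ↦ ⟨fun h ↦ hj α (Or.inl (Or.inl h)), fun β hβ ↦ ⟨?_, fun x h ↦ ?_⟩⟩⟩
  · exact fun h ↦ hj α (Or.inl (Or.inr ⟨β, hβ, h⟩))
  · refine hj α (Or.inr (letters_subset_lettersOf ?_ h))
    exact mem_image2_of_mem (mem_image_of_mem g (mem_image_of_mem j hβ)) (mem_univ x)

theorem not_isFreshSeq_of_lt_mk (hg : ∀ i, of i * (f (g i))⁻¹ ∈ K) {κ : Cardinal.{u}}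
    (hκ : ℵ₀ < κ) (hκι : κ < #ι) (hK : #K < κ)
    (hquot : ∀ X : Set G, #X < κ → #(shiftQuots f X) < κ) (hW : #W = κ) (j : W → ι) :
    ¬ IsFreshSeq f K g j := by
  intro hj
  have hsingle (a : G) : #(shiftQuots f {a}) < κ :=
    hquot _ (by rw [mk_singleton]; exact one_lt_aleph0.trans hκ)
  let quotLetters := ⋃ β, lettersOf (shiftQuots f {g (j β)})
  have hquotLetters : #quotLetters ≤ κ := calc
    #quotLetters ≤ #W * ⨆ β, #(lettersOf (shiftQuots f {g (j β)})) := mk_iUnion_le _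
    _ ≤ κ * κ := by
      rw [hW]; gcongr; exact ciSup_le' fun β ↦ (mk_lettersOf_lt hκ (hsingle _)).le
    _ = κ := mul_eq_self hκ.le
  have hbad : #(lettersOf K ∪ range j ∪ quotLetters : Set ι) < #ι := by
    refine (mk_union_le _ _).trans_lt (add_lt_of_lt (hκ.trans hκι).le ?_
      (hquotLetters.trans_lt hκι))
    refine (mk_union_le _ _).trans_lt (add_lt_of_lt (hκ.trans hκι).le
      ((mk_lettersOf_lt hκ hK).trans hκι) ?_)
    exact mk_range_le.trans_lt (hW ▸ hκι)
  obtain ⟨s, hs⟩ := compl_nonempty_of_mk_lt_mk hbad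
  have hB (β : W) (_ : β ∈ Set.univ) :
      s ≠ j β ∧ s ∉ (shiftQuot f (g (j β)) (g s)).letters := by
    refine ⟨fun h ↦ hs (Or.inl (Or.inr ⟨β, h.symm⟩)), fun h ↦ hs (Or.inr ?_)⟩
    have hquot : shiftQuot f (g (j β)) (g s) ∈ shiftQuots f {g (j β)} :=
      mem_image2_of_mem (mem_singleton _) (mem_univ _)
    exact mem_iUnion.2 ⟨β, letters_subset_lettersOf hquot h⟩
  have := hj.mk_le_mk_shiftQuots hg (fun h ↦ hs (Or.inl (Or.inl h))) hB (mem_singleton (g s))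
  rw [mk_univ, hW] at this
  exact this.not_gt (hsingle _)

theorem not_isFreshSeq_of_cof_lt (hg : ∀ i, of i * (f (g i))⁻¹ ∈ K) (hW : ℵ₀ ≤ #W)
    (hcof : Order.cof W < #W) (hquot : ∀ X : Set G, #X < #W → #(shiftQuots f X) < #W)
    (j : W → ι) : ¬ IsFreshSeq f K g j := by
  intro hj
  obtain ⟨S, hS, hSW⟩ := Order.exists_cof_eq W
  rw [← hSW] at hcof
  have hX := hquot (g '' (j '' S)) (mk_image_le.trans_lt (mk_image_le.trans_lt hcof))
  obtain ⟨α, hαS, hα⟩ := hS.exists_lt_mk_Iio hcof hW hX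
  have hB (β : W) (hβ : β ∈ Iio α) :
      j α ≠ j β ∧ j α ∉ (shiftQuot f (g (j β)) (g (j α))).letters :=
    ⟨((hj α).2 β hβ).1.symm, ((hj α).2 β hβ).2 _⟩
  exact (hj.mk_le_mk_shiftQuots hg (hj α).1 hB
    (mem_image_of_mem g (mem_image_of_mem j hαS))).not_gt hα

end FreshSeq

theorem no_large_precmap_abelian_to_free_general (γ κ : Cardinal.{u}) (hγ : ℵ₀ < γ)
    (hκ : (ℵ₀ < κ ∧ κ < γ) ∨ (κ = γ ∧ γ.ord.cof < γ))
    (G : Type u) [CommGroup G]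
    (ι : Type u) (hι : #ι = γ) :
    ¬ ∃ (f : G → FreeGroup ι) (K : Set (FreeGroup ι)),
        #K < κ ∧ K * Set.range f = Set.univ ∧
        ∀ X : Set G, #X < κ → ∃ Y : Set (FreeGroup ι), #Y < κ ∧
          ∀ x : G, f '' (X * {x}) ⊆ Y * {f x} := by
  rintro ⟨f, K, hK, hlarge, hprec⟩
  classical
  have hκ₀ : ℵ₀ < κ := hκ.elim (·.1) fun h ↦ h.1 ▸ hγ
  have hκι : κ ≤ #ι := hι ▸ hκ.elim (·.2.le) (·.1.le)
  choose g hg using fun i ↦ exists_mul_inv_mem_of_mul_range_eq_univ hlarge (FreeGroup.of i)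
  have hquot (X : Set G) (hX : #X < κ) : #(shiftQuots f X) < κ :=
    let ⟨Y, hY, hXY⟩ := hprec X hX
    (mk_le_mk_of_subset (shiftQuots_subset hXY)).trans_lt hY
  have hW : #κ.ord.ToType = κ := mk_ord_toType κ
  obtain ⟨j, hj⟩ := exists_isFreshSeq (W := κ.ord.ToType) g hκ₀ hκι hK hquot
    fun α ↦ (mk_Iio_lt α (by simp)).trans_eq hW
  rcases hκ with ⟨-, hκγ⟩ | ⟨hκγ, hcof⟩
  · exact not_isFreshSeq_of_lt_mk hg hκ₀ (hι ▸ hκγ) hK hquot hW j hj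
  · rw [← hW] at hκ₀ hquot
    refine not_isFreshSeq_of_cof_lt hg hκ₀.le ?_ hquot j hj
    rwa [Ordinal.cof_toType, hW, hκγ]

/-- Let `G` be an Abelian group of cardinality `γ > ℵ₀` and let `F_γ` be the free group
of rank `γ`. If either `ℵ₀ < κ < γ`, or `κ = γ` and `γ` is singular, then there is no
`≺`-mapping `f : G → F_γ` (with respect to `κ`) whose image is large: there are no
`f : G → F_γ` and `K ∈ [F_γ]^{<κ}` with `F_γ = K ⬝ f(G)` such that for every
`X ∈ [G]^{<κ}` there is `Y ∈ [F_γ]^{<κ}` with `f(X x) ⊆ Y ⬝ f(x)` for all `x ∈ G`. -/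
theorem no_large_precmap_abelian_to_free (γ κ : Cardinal.{u}) (hγ : ℵ₀ < γ)
    (hκ : (ℵ₀ < κ ∧ κ < γ) ∨ (κ = γ ∧ γ.ord.cof < γ))
    (G : Type u) [CommGroup G] (hG : #G = γ)
    (ι : Type u) (hι : #ι = γ) :
    ¬ ∃ (f : G → FreeGroup ι) (K : Set (FreeGroup ι)),
        #K < κ ∧ K * Set.range f = Set.univ ∧
        ∀ X : Set G, #X < κ → ∃ Y : Set (FreeGroup ι), #Y < κ ∧
          ∀ x : G, f '' (X * {x}) ⊆ Y * {f x} :=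
  no_large_precmap_abelian_to_free_general γ κ hγ hκ G ι hι
end

section
/- Let G and H be groups, let γ be a singular uncountable cardinal, and let f : G → H be a map such that for every A ∈ [G]^{<γ} there exists Y ∈ [H]^{<γ} with f(a·x) ∈ Y·f(x) for all a ∈ A and x ∈ G. Then there exists a cardinal δ < γ such that for every a ∈ G, the set {f(a·x)·f(x)⁻¹ : x ∈ G} has cardinality less than δ. -/
open Cardinal Pointwise

universe u

/-- Let `G`, `H` be groups, `γ` a singular uncountable cardinal, and `f : G → H` a map
such that for every `A ∈ [G]^{<γ}` there is `Y ∈ [H]^{<γ}` with `f(a x) ∈ Y ⬝ f(x)` for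
all `a ∈ A`, `x ∈ G`. Then there is a cardinal `δ < γ` such that for every `a ∈ G` the
set `{f(a x) f(x)⁻¹ : x ∈ G}` has cardinality less than `δ`. -/
theorem exists_uniform_bound_of_precmap (γ : Cardinal.{u}) (hγ : ℵ₀ < γ)
    (hsing : γ.ord.cof < γ)
    (G H : Type u) [Group G] [Group H] (f : G → H)
    (hf : ∀ A : Set G, #A < γ → ∃ Y : Set H, #Y < γ ∧
        ∀ a ∈ A, ∀ x : G, f (a * x) ∈ Y * {f x}) :
    ∃ δ : Cardinal.{u}, δ < γ ∧
      ∀ a : G, #(Set.range fun x : G => f (a * x) * (f x)⁻¹) < δ := by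
  by_contra hcon
  push_neg at hcon
  obtain ⟨ι, g, hlsub, hcard⟩ := Ordinal.exists_lsub_cof γ.ord
  have hchoice : ∀ i : ι, ∃ a : G,
      (g i).card ≤ #(Set.range fun x : G => f (a * x) * (f x)⁻¹) := by
    intro i
    have h1 : (g i).card < γ := by
      rw [← Cardinal.lt_ord]
      exact (Ordinal.lt_lsub g i).trans_le hlsub.le
    obtain ⟨a, ha⟩ := hcon (g i).card h1
    exact ⟨a, ha⟩
  choose a ha using hchoice
  have hA : #(Set.range a) < γ := Cardinal.mk_range_le.trans_lt (hcard ▸ hsing)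
  obtain ⟨Y, hY, hmem⟩ := hf (Set.range a) hA
  have hsub : ∀ i, (Set.range fun x : G => f (a i * x) * (f x)⁻¹) ⊆ Y := by
    rintro i _ ⟨x, rfl⟩
    obtain ⟨y, hy, z, hz, hyz⟩ := hmem (a i) ⟨i, rfl⟩ x
    simp only [Set.mem_singleton_iff] at hz
    subst hz
    show f (a i * x) * (f x)⁻¹ ∈ Y
    have : f (a i * x) * (f x)⁻¹ = y := by
      rw [← hyz]; group
    rwa [this]
  have hle : ∀ i, (g i).card ≤ #Y :=
    fun i => (ha i).trans (Cardinal.mk_le_mk_of_subset (hsub i))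
  have hord : γ.ord ≤ (Order.succ #Y).ord := by
    rw [← hlsub]
    apply Ordinal.lsub_le
    intro i
    rw [Cardinal.lt_ord]
    exact (hle i).trans_lt (Order.lt_succ _)
  have hγle : γ ≤ Order.succ #Y := Cardinal.ord_le_ord.1 hord
  have hγeq : γ = Order.succ #Y := le_antisymm hγle (Order.succ_le_of_lt hY)
  have hY0 : ℵ₀ ≤ #Y := by
    have := hγ.trans_le hγle
    exact Order.lt_succ_iff.1 this
  have hreg := Cardinal.isRegular_succ hY0
  rw [← hγeq] at hreg
  exact hsing.not_ge hreg.2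
end

section
/- Let G be an Abelian group of cardinality γ > ℵ₀, and let (G_α)_{α<γ} be a family of subgroups of G such that G_0 is trivial, G_α ⊊ G_β for α < β < γ, G_β = ⋃_{α<β} G_α for every limit ordinal β < γ, ⋃_{α<γ} G_α = G, and [G_{α+1} : G_α] = ℵ₀ for each α < γ. For each α < γ, let X_α ⊆ G_{α+1} \ G_α be a transversal, i.e., G_{α+1} \ G_α = X_α·G_α and distinct elements of X_α lie in distinct cosets of G_α. Then every element g ∈ G with g ≠ e admits a representation g = x_s ⋯ x_1 x_0 where x_i ∈ X_{α_i} for i ∈ {0,…,s} and α_0 > α_1 > ⋯ > α_s, and this representation is unique. -/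
open Cardinal Pointwise

universe u

/-!
An element of the layer `G_{α+1} \ G_α` is `x h` with `x ∈ X_α` and `h ∈ G_α`; splitting off `x`
and recursing on `h` (transfinite induction on a level containing `g`) produces a representation.
Conversely the product of a representation with leading index `α` lies in the layer
`G_{α+1} \ G_α`, and distinct layers are disjoint, so two representations of the same element have
the same leading index, then the same leading factor because `X_α` is a transversal, and by
induction the same tail.
-/
section NormalForm

variable {G : Type*} {X : Ordinal → Set G}

/-- `[(α₀, x₀), …, (α_s, x_s)]` with `β > α₀ > ⋯ > α_s` and `x_i ∈ X α_i`, standing for the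
product `x₀ ⋯ x_s`. -/
inductive IsNormalForm (X : Ordinal → Set G) : Ordinal → List (Ordinal × G) → Prop
  | nil (β : Ordinal) : IsNormalForm X β []
  | cons {α β : Ordinal} {x : G} {t : List (Ordinal × G)} :
      α < β → x ∈ X α → IsNormalForm X α t → IsNormalForm X β ((α, x) :: t)

namespace IsNormalForm

theorem mono {β β' : Ordinal} {l : List (Ordinal × G)} (hl : IsNormalForm X β l)
    (hβ : β ≤ β') : IsNormalForm X β' l := by
  cases hl with
  | nil => exact nil β'
  | cons hα hx ht => exact cons (hα.trans_le hβ) hx ht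

theorem cons_iff {α β : Ordinal} {x : G} {t : List (Ordinal × G)} :
    IsNormalForm X β ((α, x) :: t) ↔ α < β ∧ x ∈ X α ∧ IsNormalForm X α t :=
  ⟨fun | cons hα hx ht => ⟨hα, hx, ht⟩, fun ⟨hα, hx, ht⟩ => cons hα hx ht⟩

theorem iff_isChain {β : Ordinal} {l : List (Ordinal × G)} :
    IsNormalForm X β l ↔
      (l.map Prod.fst).IsChain (· > ·) ∧ ∀ p ∈ l, p.1 < β ∧ p.2 ∈ X p.1 := by
  induction l generalizing β with
  | nil => exact ⟨fun _ => by simp, fun _ => nil β⟩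
  | cons p t ih =>
    obtain ⟨α, x⟩ := p
    rw [List.isChain_iff_pairwise] at ih ⊢
    rw [cons_iff, ih, List.map_cons, List.pairwise_cons, List.forall_mem_cons,
      List.forall_mem_map]
    constructor
    · rintro ⟨hα, hx, hchain, ht⟩
      exact ⟨⟨fun p hp => (ht p hp).1, hchain⟩, ⟨hα, hx⟩,
        fun p hp => ⟨(ht p hp).1.trans hα, (ht p hp).2⟩⟩
    · rintro ⟨⟨hlt, hchain⟩, ⟨hα, hx⟩, ht⟩
      exact ⟨hα, hx, hchain, fun p hp => ⟨hlt p hp, (ht p hp).2⟩⟩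

end IsNormalForm

end NormalForm

section Filtration

variable {G : Type*} [Group G] {Gs : Ordinal → Subgroup G} {X : Ordinal → Set G} {o : Ordinal}

theorem lt_of_mem_of_notMem (hmono : MonotoneOn Gs (Set.Iio o))
    {β β' : Ordinal} {g : G} (hg : g ∈ Gs β) (hg' : g ∉ Gs β') (hβ' : β' < o) : β' < β :=
  lt_of_not_ge fun h => hg' (hmono (h.trans_lt hβ') hβ' h hg)

theorem eq_of_mem_sdiff_of_mem_sdiff (hmono : MonotoneOn Gs (Set.Iio o))
    {α α' : Ordinal} {g : G} (hα : α < o) (hα' : α' < o)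
    (hg : g ∈ (Gs (α + 1) : Set G) \ Gs α) (hg' : g ∈ (Gs (α' + 1) : Set G) \ Gs α') :
    α = α' :=
  le_antisymm (Order.lt_add_one_iff.1 (lt_of_mem_of_notMem hmono hg'.1 hg.2 hα))
    (Order.lt_add_one_iff.1 (lt_of_mem_of_notMem hmono hg.1 hg'.2 hα'))

theorem mul_mem_sdiff (hcover : ∀ α < o, (Gs (α + 1) : Set G) \ Gs α = X α * Gs α)
    {α : Ordinal} {x h : G} (hα : α < o) (hx : x ∈ X α) (hh : h ∈ Gs α) :
    x * h ∈ (Gs (α + 1) : Set G) \ Gs α :=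
  hcover α hα ▸ Set.mul_mem_mul hx hh

namespace IsNormalForm

theorem prod_mem (hmono : MonotoneOn Gs (Set.Iio o))
    (hcover : ∀ α < o, (Gs (α + 1) : Set G) \ Gs α = X α * Gs α)
    {β : Ordinal} {l : List (Ordinal × G)} (hl : IsNormalForm X β l) (hβ : β < o) :
    (l.map Prod.snd).prod ∈ Gs β := by
  induction hl with
  | nil => exact one_mem _
  | cons hα hx _ ih =>
    have hα' := hα.trans hβ
    have hsucc := Order.add_one_le_of_lt hα
    exact hmono (hsucc.trans_lt hβ) hβ hsucc (mul_mem_sdiff hcover hα' hx (ih hα')).1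

theorem prod_cons_mem_sdiff (hmono : MonotoneOn Gs (Set.Iio o))
    (hcover : ∀ α < o, (Gs (α + 1) : Set G) \ Gs α = X α * Gs α)
    {α β : Ordinal} {x : G} {t : List (Ordinal × G)} (hl : IsNormalForm X β ((α, x) :: t))
    (hβ : β ≤ o) : (((α, x) :: t).map Prod.snd).prod ∈ (Gs (α + 1) : Set G) \ Gs α := by
  obtain ⟨hα, hx, ht⟩ := cons_iff.1 hl
  have hα' := hα.trans_le hβ
  exact mul_mem_sdiff hcover hα' hx (ht.prod_mem hmono hcover hα')

end IsNormalForm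

theorem exists_isNormalForm (h0 : Gs 0 = ⊥)
    (hcover : ∀ α < o, (Gs (α + 1) : Set G) \ Gs α = X α * Gs α)
    (hlim : ∀ β < o, Order.IsSuccLimit β → (Gs β : Set G) = ⋃ α < β, (Gs α : Set G))
    {β : Ordinal} (hβ : β < o) {g : G} (hg : g ∈ Gs β) :
    ∃ l, IsNormalForm X β l ∧ (l.map Prod.snd).prod = g := by
  induction β using Ordinal.limitRecOn generalizing g with
  | zero =>
    rw [h0, Subgroup.mem_bot] at hg
    exact ⟨[], .nil 0, hg.symm⟩
  | add_one δ ih =>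
    have hδ : δ < δ + 1 := Order.lt_add_one_iff.2 le_rfl
    by_cases hgδ : g ∈ Gs δ
    · obtain ⟨l, hl, rfl⟩ := ih (hδ.trans hβ) hgδ
      exact ⟨l, hl.mono hδ.le, rfl⟩
    · obtain ⟨x, hx, h, hh, rfl⟩ : g ∈ X δ * Gs δ := hcover δ (hδ.trans hβ) ▸ ⟨hg, hgδ⟩
      obtain ⟨t, ht, rfl⟩ := ih (hδ.trans hβ) hh
      exact ⟨(δ, x) :: t, .cons hδ hx ht, rfl⟩
  | limit β hβlim ih =>
    obtain ⟨α, hα, hgα⟩ := Set.mem_iUnion₂.1 ((Set.ext_iff.1 (hlim β hβ hβlim) g).1 hg)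
    obtain ⟨l, hl, rfl⟩ := ih α hα (hα.trans hβ) hgα
    exact ⟨l, hl.mono hα.le, rfl⟩

end Filtration

section Uniqueness

variable {G : Type*} [CommGroup G] {Gs : Ordinal → Subgroup G} {X : Ordinal → Set G} {o : Ordinal}

namespace IsNormalForm

theorem eq_of_prod_eq (hmono : MonotoneOn Gs (Set.Iio o))
    (hcover : ∀ α < o, (Gs (α + 1) : Set G) \ Gs α = X α * Gs α)
    (hsep : ∀ α < o, ∀ x ∈ X α, ∀ y ∈ X α, x * y⁻¹ ∈ Gs α → x = y)
    {β₁ β₂ : Ordinal} {l₁ l₂ : List (Ordinal × G)} (h₁ : IsNormalForm X β₁ l₁)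
    (h₂ : IsNormalForm X β₂ l₂) (hβ₁ : β₁ ≤ o) (hβ₂ : β₂ ≤ o)
    (heq : (l₁.map Prod.snd).prod = (l₂.map Prod.snd).prod) : l₁ = l₂ := by
  induction h₁ generalizing β₂ l₂ with
  | nil =>
    cases h₂ with
    | nil => rfl
    | cons hα hx ht =>
      exact absurd (heq ▸ one_mem _) (prod_cons_mem_sdiff hmono hcover (cons hα hx ht) hβ₂).2
  | @cons α _ x t hα hx ht ih =>
    cases h₂ with
    | nil =>
      exact absurd (heq.symm ▸ one_mem _) (prod_cons_mem_sdiff hmono hcover (cons hα hx ht) hβ₁).2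
    | @cons α' _ x' t' hα' hx' ht' =>
      obtain rfl := eq_of_mem_sdiff_of_mem_sdiff hmono (hα.trans_le hβ₁) (hα'.trans_le hβ₂)
        (prod_cons_mem_sdiff hmono hcover (cons hα hx ht) hβ₁)
        (heq ▸ prod_cons_mem_sdiff hmono hcover (cons hα' hx' ht') hβ₂)
      simp only [List.map_cons, List.prod_cons] at heq
      have hαo := hα.trans_le hβ₁
      have hquot : x * x'⁻¹ = (t'.map Prod.snd).prod * (t.map Prod.snd).prod⁻¹ :=
        mul_inv_eq_mul_inv_iff_mul_eq_mul.2 (heq.trans (mul_comm _ _))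
      obtain rfl := hsep α hαo x hx x' hx' <| hquot ▸
        mul_mem (ht'.prod_mem hmono hcover hαo) (inv_mem (ht.prod_mem hmono hcover hαo))
      rw [ih ht' hαo.le hαo.le (mul_left_cancel heq)]

end IsNormalForm

end Uniqueness

theorem existsUnique_representation_general (γ : Cardinal.{u})
    (G : Type u) [CommGroup G]
    (Gs : Ordinal.{u} → Subgroup G)
    (h0 : Gs 0 = ⊥)
    (hmono : ∀ α β : Ordinal.{u}, α < β → β < γ.ord → Gs α < Gs β)
    (hlim : ∀ β : Ordinal.{u}, β < γ.ord → Order.IsSuccLimit β →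
      (Gs β : Set G) = ⋃ (α : Ordinal.{u}) (_ : α < β), (Gs α : Set G))
    (hunion : (⋃ (α : Ordinal.{u}) (_ : α < γ.ord), (Gs α : Set G)) = Set.univ)
    (X : Ordinal.{u} → Set G)
    (hXcover : ∀ α : Ordinal.{u}, α < γ.ord →
      (Gs (α + 1) : Set G) \ (Gs α : Set G) = X α * (Gs α : Set G))
    (hXsep : ∀ α : Ordinal.{u}, α < γ.ord →
      ∀ x ∈ X α, ∀ y ∈ X α, x * y⁻¹ ∈ Gs α → x = y)
    (g : G) :
    ∃! l : List (Ordinal.{u} × G),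
      (l.map Prod.fst).Chain' (· > ·) ∧
      (∀ p ∈ l, p.1 < γ.ord ∧ p.2 ∈ X p.1) ∧
      (l.map Prod.snd).prod = g := by
  have hmono' : StrictMonoOn Gs (Set.Iio γ.ord) := fun α _ β hβ hαβ => hmono α β hαβ hβ
  obtain ⟨α, hα, hgα⟩ := Set.mem_iUnion₂.1 (hunion.symm ▸ Set.mem_univ g)
  obtain ⟨l, hl, rfl⟩ := exists_isNormalForm (X := X) h0 hXcover hlim hα hgα
  obtain ⟨hchain, hmem⟩ := IsNormalForm.iff_isChain.1 (hl.mono hα.le)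
  refine ⟨l, ⟨hchain, hmem, rfl⟩, fun l' ⟨hchain', hmem', hprod⟩ => ?_⟩
  exact (IsNormalForm.iff_isChain.2 ⟨hchain', hmem'⟩).eq_of_prod_eq hmono'.monotoneOn hXcover
    hXsep hl le_rfl hα.le hprod

/-- Given a chain of subgroups `(G_α)_{α<γ}` of an Abelian group `G` of cardinality
`γ > ℵ₀` (with `G_0` trivial, strictly increasing, continuous at limits, union `G`, and
`[G_{α+1} : G_α] = ℵ₀`) and transversals `X_α` of the cosets of `G_α` in
`G_{α+1} \ G_α`, every `g ≠ e` has a unique representation `g = x_s ⋯ x_1 x_0` with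
`x_i ∈ X_{α_i}` and `α_0 > α_1 > ⋯ > α_s`; here such a representation is encoded as the
list `[(α_0, x_0), (α_1, x_1), …, (α_s, x_s)]`. -/
theorem existsUnique_representation (γ : Cardinal.{u}) (hγ : ℵ₀ < γ)
    (G : Type u) [CommGroup G] (hG : #G = γ)
    (Gs : Ordinal.{u} → Subgroup G)
    (h0 : Gs 0 = ⊥)
    (hmono : ∀ α β : Ordinal.{u}, α < β → β < γ.ord → Gs α < Gs β)
    (hlim : ∀ β : Ordinal.{u}, β < γ.ord → Order.IsSuccLimit β →
      (Gs β : Set G) = ⋃ (α : Ordinal.{u}) (_ : α < β), (Gs α : Set G))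
    (hunion : (⋃ (α : Ordinal.{u}) (_ : α < γ.ord), (Gs α : Set G)) = Set.univ)
    (hindex : ∀ α : Ordinal.{u}, α < γ.ord →
      #(↥(Gs (α + 1)) ⧸ ((Gs α).subgroupOf (Gs (α + 1)))) = ℵ₀)
    (X : Ordinal.{u} → Set G)
    (hXsub : ∀ α : Ordinal.{u}, α < γ.ord →
      X α ⊆ (Gs (α + 1) : Set G) \ (Gs α : Set G))
    (hXcover : ∀ α : Ordinal.{u}, α < γ.ord →
      (Gs (α + 1) : Set G) \ (Gs α : Set G) = X α * (Gs α : Set G))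
    (hXsep : ∀ α : Ordinal.{u}, α < γ.ord →
      ∀ x ∈ X α, ∀ y ∈ X α, x * y⁻¹ ∈ Gs α → x = y)
    (g : G) (hg : g ≠ 1) :
    ∃! l : List (Ordinal.{u} × G),
      (l.map Prod.fst).Chain' (· > ·) ∧
      (∀ p ∈ l, p.1 < γ.ord ∧ p.2 ∈ X p.1) ∧
      (l.map Prod.snd).prod = g :=
  existsUnique_representation_general γ G Gs h0 hmono hlim hunion X hXcover hXsep g
end
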